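/- arXiv:2409.17318 — 9 statements merged into one kernel-verified Lean document; each statement's English description precedes it below -/
import Mathlib

section
/- The number of Padovan words of length n (for n ≥ 3) equals the (n+2)-nd Padovan number, where the Padovan sequence is defined by P(0)=1, P(1)=P(2)=0 and P(n)=P(n-2)+P(n-3) for n ≥ 3. -/
/-- A binary word (`false` = 0, `true` = 1) is Padovan if it starts and ends
with 0, contains no subword 00, and contains no subword 111. -/
def IsPadovan (w : List Bool) : Prop :=
  w.head? = some false ∧ w.getLast? = some false ∧
    ¬ [false, false] <:+: w ∧ ¬ [true, true, true] <:+: w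

/-- The Padovan sequence: P(0)=1, P(1)=P(2)=0, P(n)=P(n-2)+P(n-3). -/
def padovan : ℕ → ℕ
  | 0 => 1
  | 1 => 0
  | 2 => 0
  | n + 3 => padovan (n + 1) + padovan n

lemma pad_cons2 (w : List Bool) (hw : w.head? = some false) :
    IsPadovan (false :: true :: w) ↔ IsPadovan w := by
  obtain ⟨x, xs, rfl⟩ : ∃ x xs, w = x :: xs := by
    cases w with
    | nil => simp at hw
    | cons x xs => exact ⟨x, xs, rfl⟩
  simp only [List.head?_cons, Option.some.injEq] at hw
  subst hw
  simp [IsPadovan, List.infix_cons_iff, List.cons_prefix_cons]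

lemma pad_cons3 (w : List Bool) (hw : w.head? = some false) :
    IsPadovan (false :: true :: true :: w) ↔ IsPadovan w := by
  obtain ⟨x, xs, rfl⟩ : ∃ x xs, w = x :: xs := by
    cases w with
    | nil => simp at hw
    | cons x xs => exact ⟨x, xs, rfl⟩
  simp only [List.head?_cons, Option.some.injEq] at hw
  subst hw
  simp [IsPadovan, List.infix_cons_iff, List.cons_prefix_cons]

lemma pad_decomp {v : List Bool} (hv : IsPadovan v) (hlen : 2 ≤ v.length) :
    (∃ w, IsPadovan w ∧ v = false :: true :: w) ∨
      (∃ w, IsPadovan w ∧ v = false :: true :: true :: w) := by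
  obtain ⟨hh, hl, h00, h111⟩ := hv
  match v, hlen with
  | a :: b :: rest, _ =>
    simp only [List.head?_cons, Option.some.injEq] at hh
    subst hh
    cases b with
    | false => exact absurd ⟨[], rest, rfl⟩ h00
    | true =>
      match rest with
      | [] => simp at hl
      | c :: rest' =>
        cases c with
        | false =>
          refine Or.inl ⟨false :: rest', ?_, rfl⟩
          exact (pad_cons2 (false :: rest') rfl).mp ⟨rfl, hl, h00, h111⟩
        | true =>
          match rest' with
          | [] => simp at hl
          | d :: rest'' =>
            cases d with
            | true => exact absurd ⟨[false], rest'', rfl⟩ h111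
            | false =>
              refine Or.inr ⟨false :: rest'', ?_, rfl⟩
              exact (pad_cons3 (false :: rest'') rfl).mp ⟨rfl, hl, h00, h111⟩

def padSet (n : ℕ) : Set (List Bool) := {w | w.length = n ∧ IsPadovan w}

lemma padSet_finite (n : ℕ) : (padSet n).Finite :=
  (List.finite_length_eq (Bool) n).subset fun _ hw => hw.1

lemma padSet_rec (n : ℕ) :
    padSet (n + 3) =
      (fun w => false :: true :: w) '' padSet (n + 1) ∪
        (fun w => false :: true :: true :: w) '' padSet n := by
  ext v
  constructor
  · rintro ⟨hlen, hp⟩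
    rcases pad_decomp hp (by omega) with ⟨w, hw, rfl⟩ | ⟨w, hw, rfl⟩
    · exact Or.inl ⟨w, ⟨by simpa using hlen, hw⟩, rfl⟩
    · exact Or.inr ⟨w, ⟨by simpa using hlen, hw⟩, rfl⟩
  · rintro (⟨w, ⟨hlen, hw⟩, rfl⟩ | ⟨w, ⟨hlen, hw⟩, rfl⟩)
    · exact ⟨by simp [hlen], (pad_cons2 w hw.1).mpr hw⟩
    · exact ⟨by simp [hlen], (pad_cons3 w hw.1).mpr hw⟩

lemma padSet_ncard_rec (n : ℕ) :
    (padSet (n + 3)).ncard = (padSet (n + 1)).ncard + (padSet n).ncard := by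
  have hdisj : Disjoint ((fun w => false :: true :: w) '' padSet (n + 1))
      ((fun w => false :: true :: true :: w) '' padSet n) := by
    rw [Set.disjoint_left]
    rintro v ⟨w, hw, rfl⟩ ⟨w', hw', hv⟩
    have h1 : w.head? = some false := hw.2.1
    have h2 : w = true :: w' := by simpa using hv.symm
    rw [h2] at h1; simp at h1
  rw [padSet_rec n, Set.ncard_union_eq hdisj ((padSet_finite _).image _)
      ((padSet_finite _).image _), Set.ncard_image_of_injective _
      (fun a b h => by simpa using h), Set.ncard_image_of_injective _
      (fun a b h => by simpa using h)]

lemma padSet_zero : (padSet 0).ncard = 0 := by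
  have : padSet 0 = ∅ := by
    ext w
    simp only [padSet, Set.mem_setOf_eq, Set.mem_empty_iff_false, iff_false, not_and]
    rintro hlen ⟨hh, -⟩
    rw [List.length_eq_zero_iff] at hlen
    subst hlen; simp at hh
  simp [this]

lemma padSet_one : (padSet 1).ncard = 1 := by
  have : padSet 1 = {[false]} := by
    ext w
    constructor
    · rintro ⟨hlen, hh, -, -⟩
      rw [List.length_eq_one_iff] at hlen
      obtain ⟨a, rfl⟩ := hlen
      simp only [List.head?_cons, Option.some.injEq] at hh
      simp [hh]
    · rintro rfl
      refine ⟨rfl, rfl, rfl, ?_, ?_⟩ <;>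
        simp [List.infix_cons_iff, List.cons_prefix_cons]
  simp [this]

lemma padSet_two : (padSet 2).ncard = 0 := by
  have : padSet 2 = ∅ := by
    ext w
    simp only [padSet, Set.mem_setOf_eq, Set.mem_empty_iff_false, iff_false, not_and]
    rintro hlen ⟨hh, hl, h00, -⟩
    match w, hlen with
    | [a, b], _ =>
      simp only [List.head?_cons, Option.some.injEq] at hh
      simp only [List.getLast?_cons_cons, List.getLast?_singleton, Option.some.injEq] at hl
      subst hh; subst hl
      exact h00 ⟨[], [], rfl⟩
  simp [this]

lemma padSet_card : ∀ n, (padSet n).ncard = padovan (n + 2)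
  | 0 => padSet_zero
  | 1 => padSet_one
  | 2 => padSet_two
  | n + 3 => by
    rw [padSet_ncard_rec n, padSet_card (n + 1), padSet_card n]
    rfl

theorem padovan_words_count (n : ℕ) (hn : 3 ≤ n) :
    Nat.card {w : List Bool // w.length = n ∧ IsPadovan w} = padovan (n + 2) := by
  rw [← padSet_card n, Set.ncard]
  exact Nat.card_congr (Equiv.subtypeEquivRight (by intro w; exact Iff.rfl))
end

section
/- For n ≥ 2, the minimum number of 1s in a Padovan word of length n is ⌊n/2⌋. -/
/-- Auxiliary: no `00` infix implies `#false ≤ #true + 1`. -/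
theorem padovan_aux_count : ∀ w : List Bool, ¬ [false, false] <:+: w →
    w.count false ≤ w.count true + 1
  | [], _ => by simp
  | [b], _ => by cases b <;> simp
  | false :: false :: t, h => absurd ⟨[], t, rfl⟩ h
  | false :: true :: t, h => by
      have ht : ¬ [false, false] <:+: t := fun h' =>
        h ((h'.trans (List.infix_cons (List.infix_refl t))).trans
          (List.infix_cons (List.infix_refl _)))
      have := padovan_aux_count t ht
      simp only [List.count_cons] at this ⊢
      simp_all
  | true :: c :: t, h => by
      have ht : ¬ [false, false] <:+: (c :: t) := fun h' =>
        h (h'.trans (List.infix_cons (List.infix_refl _)))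
      have := padovan_aux_count (c :: t) ht
      cases c <;> simp_all [List.count_cons] <;> omega

theorem padovan_count_sum : ∀ w : List Bool, w.count true + w.count false = w.length
  | [] => by simp
  | b :: t => by
      have := padovan_count_sum t
      cases b <;> simp [List.count_cons] <;> omega

def padA : ℕ → List Bool
  | 0 => [false]
  | k + 1 => false :: true :: padA k

theorem padA_length (k : ℕ) : (padA k).length = 2 * k + 1 := by
  induction k with
  | zero => rfl
  | succ k ih => simp [padA, ih]; omega

theorem padA_count (k : ℕ) : (padA k).count true = k := by
  induction k with
  | zero => rfl
  | succ k ih => simp [padA, List.count_cons, ih]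

theorem padA_head (k : ℕ) : (padA k).head? = some false := by
  cases k <;> rfl

theorem padA_ne_nil (k : ℕ) : padA k ≠ [] := by
  cases k <;> simp [padA]

theorem padA_last (k : ℕ) : (padA k).getLast? = some false := by
  induction k with
  | zero => rfl
  | succ k ih =>
      show (false :: true :: padA k).getLast? = some false
      obtain ⟨a, l, hl⟩ := List.exists_cons_of_ne_nil (padA_ne_nil k)
      rw [hl] at ih ⊢
      simpa using ih

theorem padA_noFF (k : ℕ) : ¬ [false, false] <:+: padA k ∧
    ¬ [false, false] <:+: (true :: padA k) := by
  induction k with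
  | zero =>
      constructor <;> decide
  | succ k ih =>
      have h2 : ¬ [false, false] <:+: (true :: padA (k+1)) := by
        rw [List.infix_cons_iff]
        rintro (hp | hi)
        · exact absurd (List.cons_prefix_cons.mp hp).1 (by simp)
        · rw [show padA (k+1) = false :: true :: padA k from rfl,
            List.infix_cons_iff] at hi
          rcases hi with hp | hi
          · have := (List.cons_prefix_cons.mp hp).2
            exact absurd (List.cons_prefix_cons.mp this).1 (by simp)
          · exact ih.2 hi
      refine ⟨?_, h2⟩
      rw [show padA (k+1) = false :: true :: padA k from rfl, List.infix_cons_iff]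
      rintro (hp | hi)
      · have := (List.cons_prefix_cons.mp hp).2
        exact absurd (List.cons_prefix_cons.mp this).1 (by simp)
      · exact ih.2 hi

theorem padA_noTT (k : ℕ) : ¬ [true, true] <:+: padA k ∧
    ¬ [true, true] <:+: (true :: padA k) := by
  induction k with
  | zero => constructor <;> decide
  | succ k ih =>
      have h2 : ¬ [true, true] <:+: (true :: padA (k+1)) := by
        rw [List.infix_cons_iff]
        rintro (hp | hi)
        · have := (List.cons_prefix_cons.mp hp).2
          rw [show padA (k+1) = false :: true :: padA k from rfl] at this
          exact absurd (List.cons_prefix_cons.mp this).1 (by simp)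
        · rw [show padA (k+1) = false :: true :: padA k from rfl,
            List.infix_cons_iff] at hi
          rcases hi with hp | hi
          · exact absurd (List.cons_prefix_cons.mp hp).1 (by simp)
          · exact ih.2 hi
      refine ⟨?_, h2⟩
      rw [show padA (k+1) = false :: true :: padA k from rfl, List.infix_cons_iff]
      rintro (hp | hi)
      · exact absurd (List.cons_prefix_cons.mp hp).1 (by simp)
      · exact ih.2 hi

theorem padA_noTTT (k : ℕ) : ¬ [true, true, true] <:+: padA k := fun h =>
  (padA_noTT k).1 ((by decide : [true, true] <:+: [true, true, true]).trans h)

theorem padA_isPadovan (k : ℕ) : IsPadovan (padA k) :=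
  ⟨padA_head k, padA_last k, (padA_noFF k).1, padA_noTTT k⟩

/-- Even-length word `0 1 1 0 (1 0)^j`. -/
def padB (j : ℕ) : List Bool := false :: true :: true :: padA j

theorem padB_isPadovan (j : ℕ) : IsPadovan (padB j) := by
  refine ⟨rfl, ?_, ?_, ?_⟩
  · show (false :: true :: true :: padA j).getLast? = some false
    have := padA_last j
    obtain ⟨a, l, hl⟩ := List.exists_cons_of_ne_nil (padA_ne_nil j)
    rw [hl] at this ⊢
    simpa using this
  · show ¬ [false, false] <:+: (false :: true :: true :: padA j)
    rw [List.infix_cons_iff]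
    rintro (hp | hi)
    · exact absurd (List.cons_prefix_cons.mp (List.cons_prefix_cons.mp hp).2).1 (by simp)
    · rw [List.infix_cons_iff] at hi
      rcases hi with hp | hi
      · exact absurd (List.cons_prefix_cons.mp hp).1 (by simp)
      · rw [List.infix_cons_iff] at hi
        rcases hi with hp | hi
        · exact absurd (List.cons_prefix_cons.mp hp).1 (by simp)
        · exact (padA_noFF j).1 hi
  · show ¬ [true, true, true] <:+: (false :: true :: true :: padA j)
    rw [List.infix_cons_iff]
    rintro (hp | hi)
    · exact absurd (List.cons_prefix_cons.mp hp).1 (by simp)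
    · rw [List.infix_cons_iff] at hi
      rcases hi with hp | hi
      · have h2 := (List.cons_prefix_cons.mp (List.cons_prefix_cons.mp hp).2).2
        obtain ⟨a, l, hl⟩ := List.exists_cons_of_ne_nil (padA_ne_nil j)
        rw [hl] at h2
        have ha : a = false := by
          have := padA_head j; rw [hl] at this; simpa using this
        rw [ha] at h2
        exact absurd (List.cons_prefix_cons.mp h2).1 (by simp)
      · rw [List.infix_cons_iff] at hi
        rcases hi with hp | hi
        · have h2 := (List.cons_prefix_cons.mp hp).2
          obtain ⟨a, l, hl⟩ := List.exists_cons_of_ne_nil (padA_ne_nil j)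
          rw [hl] at h2
          have ha : a = false := by
            have := padA_head j; rw [hl] at this; simpa using this
          rw [ha] at h2
          exact absurd (List.cons_prefix_cons.mp h2).1 (by simp)
        · exact padA_noTTT j hi

/-- For `n ≥ 2`, every Padovan word of length `n` has at least `⌊n/2⌋` ones,
and for `n ≥ 3` this bound is attained. -/
theorem padovan_min_ones (n : ℕ) (hn : 2 ≤ n) :
    (∀ w : List Bool, w.length = n → IsPadovan w → n / 2 ≤ w.count true) ∧
    (3 ≤ n → ∃ w : List Bool, w.length = n ∧ IsPadovan w ∧ w.count true = n / 2) := by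
  constructor
  · intro w hlen hpad
    have h1 := padovan_aux_count w hpad.2.2.1
    have h2 := padovan_count_sum w
    omega
  · intro h3
    rcases Nat.even_or_odd n with he | ho
    · obtain ⟨k, hk⟩ := he
      have hk2 : 2 ≤ k := by omega
      refine ⟨padB (k - 2), ?_, padB_isPadovan _, ?_⟩
      · simp [padB, padA_length]; omega
      · simp [padB, List.count_cons, padA_count]; omega
    · obtain ⟨k, hk⟩ := ho
      refine ⟨padA k, ?_, padA_isPadovan k, ?_⟩
      · rw [padA_length]; omega
      · rw [padA_count]; omega
end

section
/- For n ≥ 3, the maximum number of 1s in a Padovan word of length n is ⌊(2n−2)/3⌋. -/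
lemma isPadovan_ext {w : List Bool} (h : IsPadovan w) :
    IsPadovan (false :: true :: true :: w) := by
  obtain ⟨h1, h2, h3, h4⟩ := h
  obtain ⟨a, w', rfl⟩ : ∃ a w', w = a :: w' := by
    cases w with
    | nil => simp at h1
    | cons a w' => exact ⟨a, w', rfl⟩
  have ha : a = false := by simpa using h1
  subst ha
  refine ⟨rfl, by simpa using h2, ?_, ?_⟩
  · rintro ⟨s, t, hst⟩
    rcases s with _ | ⟨a, _ | ⟨b, _ | ⟨c, s⟩⟩⟩ <;> simp at hst
    exact h3 ⟨s, t, by simp [hst.2.2.2]⟩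
  · rintro ⟨s, t, hst⟩
    rcases s with _ | ⟨a, _ | ⟨b, _ | ⟨c, s⟩⟩⟩ <;> simp at hst
    exact h4 ⟨s, t, by simp [hst.2.2.2]⟩

lemma padovan_upper : ∀ n, ∀ w : List Bool, w.length = n → IsPadovan w →
    w.count true ≤ (2 * n - 2) / 3 := by
  intro n
  induction n using Nat.strong_induction_on with
  | _ n ih =>
    rintro w hlen ⟨h1, h2, h3, h4⟩
    rcases w with _ | ⟨a, _ | ⟨b, w⟩⟩
    · simp at h1
    · have : a = false := by simpa using h1
      subst this; simp
    · have ha : a = false := by simpa using h1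
      subst ha
      have hb : b = true := by
        cases b with
        | true => rfl
        | false => exact absurd ⟨[], w, rfl⟩ h3
      subst hb
      rcases w with _ | ⟨c, w⟩
      · simp at h2
      cases c with
      | false =>
        have hp : IsPadovan (false :: w) := by
          have hsuf : (false :: w) <:+ (false :: true :: false :: w) := ⟨[false, true], rfl⟩
          exact ⟨rfl, by simpa using h2, fun h => h3 (h.trans hsuf.isInfix),
            fun h => h4 (h.trans hsuf.isInfix)⟩
        have hlen' : (false :: w).length = w.length + 1 := by simp
        have hlt : w.length + 1 < n := by simp at hlen; omega
        have := ih (w.length + 1) hlt _ hlen' hp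
        simp at hlen ⊢
        simp at this
        omega
      | true =>
        rcases w with _ | ⟨d, w⟩
        · simp at h2
        have hd : d = false := by
          cases d with
          | false => rfl
          | true => exact absurd ⟨[false], w, rfl⟩ h4
        subst hd
        have hp : IsPadovan (false :: w) := by
          have hsuf : (false :: w) <:+ (false :: true :: true :: false :: w) :=
            ⟨[false, true, true], rfl⟩
          exact ⟨rfl, by simpa using h2, fun h => h3 (h.trans hsuf.isInfix),
            fun h => h4 (h.trans hsuf.isInfix)⟩
        have hlen' : (false :: w).length = w.length + 1 := by simp
        have hlt : w.length + 1 < n := by simp at hlen; omega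
        have := ih (w.length + 1) hlt _ hlen' hp
        simp at hlen ⊢
        simp at this
        omega

lemma padovan_exists : ∀ n, 3 ≤ n → ∃ w : List Bool, w.length = n ∧ IsPadovan w ∧
    w.count true = (2 * n - 2) / 3 := by
  intro n
  induction n using Nat.strong_induction_on with
  | _ n ih =>
    intro hn
    by_cases h6 : n < 6
    · interval_cases n
      · exact ⟨[false, true, false], by simp, ⟨rfl, rfl, by decide, by decide⟩, by simp⟩
      · exact ⟨[false, true, true, false], by simp, ⟨rfl, rfl, by decide, by decide⟩, by simp⟩
      · exact ⟨[false, true, false, true, false], by simp, ⟨rfl, rfl, by decide, by decide⟩,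
          by simp⟩
    · obtain ⟨w, hl, hp, hc⟩ := ih (n - 3) (by omega) (by omega)
      refine ⟨false :: true :: true :: w, by simp [hl]; omega, isPadovan_ext hp, ?_⟩
      simp [hc]
      omega

/-- For `n ≥ 3`, the maximum number of ones in a Padovan word of length `n`
is `⌊(2n-2)/3⌋`. -/
theorem padovan_max_ones (n : ℕ) (hn : 3 ≤ n) :
    (∀ w : List Bool, w.length = n → IsPadovan w → w.count true ≤ (2 * n - 2) / 3) ∧
    (∃ w : List Bool, w.length = n ∧ IsPadovan w ∧ w.count true = (2 * n - 2) / 3) := by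
  exact ⟨padovan_upper n, padovan_exists n hn⟩
end

section
/- The map sending a Padovan word of length n with k ones to the word obtained by replacing (left to right) each block 011 by b and each block 01 by a and deleting the final 0 is a bijection from the set of Padovan words of length n with k ones to the set of words over {a,b} with 2n−3k−2 letters a and 2k−n+1 letters b. -/
/-- Replace, from left to right, each block `011` by `b` (= `true`) and each
block `01` by `a` (= `false`), deleting the final `0`. -/
def encode : List Bool → List Bool
  | false :: true :: true :: rest => true :: encode rest
  | false :: true :: rest => false :: encode rest
  | _ => []


def decode : List Bool → List Bool
  | [] => [false]
  | false :: r => false :: true :: decode r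
  | true :: r => false :: true :: true :: decode r

lemma decode_head : ∀ v, (decode v).head? = some false := by
  intro v; cases v with
  | nil => rfl
  | cons x r => cases x <;> rfl

lemma encode_decode : ∀ v, encode (decode v) = v := by
  intro v; induction v with
  | nil => rfl
  | cons x r ih =>
    cases x
    · have h := decode_head r
      cases hr : decode r with
      | nil => rw [hr] at h; simp at h
      | cons y ys =>
        rw [hr] at h; simp at h; subst h
        show encode (false :: true :: decode r) = false :: r
        rw [hr]
        show false :: encode (false :: ys) = false :: r
        rw [← hr, ih]
    · show encode (false :: true :: true :: decode r) = true :: r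
      show true :: encode (decode r) = true :: r
      rw [ih]

lemma decode_not00 : ∀ v, ¬ [false, false] <:+: decode v := by
  intro v
  induction v with
  | nil =>
    intro h
    have := h.length_le
    simp [decode] at this
  | cons x r ih =>
    intro h
    cases x <;> simp only [decode] at h <;>
    · rw [List.infix_cons_iff] at h
      rcases h with h | h
      · rcases h with ⟨t, ht⟩; simp at ht
      rw [List.infix_cons_iff] at h
      rcases h with h | h
      · rcases h with ⟨t, ht⟩; simp at ht
      first
      | exact ih h
      | (rw [List.infix_cons_iff] at h
         rcases h with h | h
         · rcases h with ⟨t, ht⟩; simp at ht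
         · exact ih h)

lemma decode_not111 : ∀ v, ¬ [true, true, true] <:+: decode v := by
  intro v
  induction v with
  | nil =>
    intro h
    have := h.length_le
    simp [decode] at this
  | cons x r ih =>
    intro h
    cases x <;> simp only [decode] at h <;>
    · rw [List.infix_cons_iff] at h
      rcases h with h | h
      · rcases h with ⟨t, ht⟩; simp at ht
      rw [List.infix_cons_iff] at h
      rcases h with h | h
      · rcases h with ⟨t, ht⟩
        have := decode_head r
        cases hr : decode r with
        | nil => rw [hr] at this; simp at this
        | cons y ys => rw [hr] at this ht; simp at this; subst this; simp at ht
      first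
      | exact ih h
      | (rw [List.infix_cons_iff] at h
         rcases h with h | h
         · rcases h with ⟨t, ht⟩
           have := decode_head r
           cases hr : decode r with
           | nil => rw [hr] at this; simp at this
           | cons y ys => rw [hr] at this ht; simp at this; subst this; simp at ht
         · exact ih h)

lemma decode_getLast : ∀ v, (decode v).getLast? = some false := by
  intro v
  induction v with
  | nil => rfl
  | cons x r ih =>
    have hne : decode r ≠ [] := by
      intro h; have := decode_head r; rw [h] at this; simp at this
    obtain ⟨y, ys, hr⟩ : ∃ y ys, decode r = y :: ys := by
      cases hr : decode r with
      | nil => exact absurd hr hne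
      | cons y ys => exact ⟨y, ys, rfl⟩
    rw [hr] at ih
    cases x <;> simp only [decode] <;> rw [hr] <;>
      simp only [List.getLast?_cons_cons] <;> exact ih

lemma decode_isPadovan (v : List Bool) : IsPadovan (decode v) :=
  ⟨decode_head v, decode_getLast v, decode_not00 v, decode_not111 v⟩

lemma decode_length : ∀ v : List Bool, (decode v).length = 2 * v.count false + 3 * v.count true + 1 := by
  intro v
  induction v with
  | nil => rfl
  | cons x r ih => cases x <;> simp [decode, List.count_cons, ih] <;> ring

lemma decode_count_true : ∀ v : List Bool, (decode v).count true = v.count false + 2 * v.count true := by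
  intro v
  induction v with
  | nil => rfl
  | cons x r ih => cases x <;> simp [decode, List.count_cons, ih] <;> ring

lemma pad_struct (w : List Bool) (h : IsPadovan w) :
    w = [false] ∨ (∃ w', IsPadovan w' ∧ w = false :: true :: w') ∨
      (∃ w', IsPadovan w' ∧ w = false :: true :: true :: w') := by
  obtain ⟨h1, h2, h3, h4⟩ := h
  cases w with
  | nil => simp at h1
  | cons x t =>
    simp at h1; subst h1
    cases t with
    | nil => exact Or.inl rfl
    | cons y t' =>
      cases y with
      | false =>
        exact absurd (List.IsPrefix.isInfix ⟨t', rfl⟩) h3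
      | true =>
        cases t' with
        | nil => simp at h2
        | cons z t'' =>
          cases z with
          | false =>
            refine Or.inr (Or.inl ⟨false :: t'', ⟨rfl, ?_, ?_, ?_⟩, rfl⟩)
            · rw [List.getLast?_cons_cons, List.getLast?_cons_cons] at h2; exact h2
            · intro hi; exact h3 (hi.trans (List.IsSuffix.isInfix ⟨[false, true], rfl⟩))
            · intro hi; exact h4 (hi.trans (List.IsSuffix.isInfix ⟨[false, true], rfl⟩))
          | true =>
            cases t'' with
            | nil => simp at h2
            | cons u t''' =>
              cases u with
              | true =>
                exact absurd ⟨[false], t''', rfl⟩ h4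
              | false =>
                refine Or.inr (Or.inr ⟨false :: t''', ⟨rfl, ?_, ?_, ?_⟩, rfl⟩)
                · rw [List.getLast?_cons_cons, List.getLast?_cons_cons,
                    List.getLast?_cons_cons] at h2; exact h2
                · intro hi; exact h3 (hi.trans (List.IsSuffix.isInfix ⟨[false, true, true], rfl⟩))
                · intro hi; exact h4 (hi.trans (List.IsSuffix.isInfix ⟨[false, true, true], rfl⟩))

lemma decode_encode : ∀ n (w : List Bool), w.length = n → IsPadovan w →
    decode (encode w) = w := by
  intro n
  induction n using Nat.strong_induction_on with
  | _ n ih =>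
    intro w hlen h
    rcases pad_struct w h with rfl | ⟨w', hw', rfl⟩ | ⟨w', hw', rfl⟩
    · rfl
    · have hh := hw'.1
      obtain ⟨t, rfl⟩ : ∃ t, w' = false :: t := by
        cases w' with
        | nil => simp at hh
        | cons a s => simp at hh; subst hh; exact ⟨s, rfl⟩
      have : encode (false :: true :: false :: t) = false :: encode (false :: t) := rfl
      rw [this, decode]
      have := ih (false :: t).length (by simp at hlen ⊢; omega) (false :: t) rfl hw'
      rw [this]
    · have : encode (false :: true :: true :: w') = true :: encode w' := rfl
      rw [this, decode]
      have := ih w'.length (by simp at hlen ⊢; omega) w' rfl hw'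
      rw [this]


/-- The encoding is a bijection from Padovan words of length `n` with `k` ones
onto the words over `{a, b}` (`a` = `false`, `b` = `true`) with `2n-3k-2`
letters `a` and `2k-n+1` letters `b`. -/
theorem encode_bijOn (n k : ℕ) (hn : 1 ≤ n) (hk1 : n / 2 ≤ k) (hk2 : k ≤ (2 * n - 2) / 3) :
    Set.BijOn encode
      {w : List Bool | w.length = n ∧ IsPadovan w ∧ w.count true = k}
      {w : List Bool | w.count false = 2 * n - 3 * k - 2 ∧ w.count true = 2 * k + 1 - n} := by
  refine ⟨?_, ?_, ?_⟩
  · rintro w ⟨hlen, hpad, hcnt⟩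
    have hde : decode (encode w) = w := decode_encode w.length w rfl hpad
    have h1 : w.length = 2 * (encode w).count false + 3 * (encode w).count true + 1 := by
      conv_lhs => rw [← hde]
      exact decode_length (encode w)
    have h2 : w.count true = (encode w).count false + 2 * (encode w).count true := by
      conv_lhs => rw [← hde]
      exact decode_count_true (encode w)
    constructor <;> omega
  · rintro w1 ⟨_, hp1, _⟩ w2 ⟨_, hp2, _⟩ heq
    have e1 := decode_encode w1.length w1 rfl hp1
    have e2 := decode_encode w2.length w2 rfl hp2
    rw [← e1, ← e2, heq]
  · rintro v ⟨ha, hb⟩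
    refine ⟨decode v, ⟨?_, decode_isPadovan v, ?_⟩, encode_decode v⟩
    · rw [decode_length]; omega
    · rw [decode_count_true]; omega
end

section
/- The number of Padovan words of length n with exactly k ones equals the binomial coefficient C(n−k−1, 2n−3k−2), for n ≥ 1 and ⌊n/2⌋ ≤ k ≤ ⌊(2n−2)/3⌋. -/
namespace PadovanAux

def padSet (n k : ℕ) : Set (List Bool) :=
  {w | w.length = n ∧ IsPadovan w ∧ w.count true = k}

def A (n k : ℕ) : ℕ :=
  if k + 1 ≤ n ∧ n ≤ 2 * k + 1 then (n - k - 1).choose (2 * k + 1 - n) else 0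

lemma padSet_finite (n k : ℕ) : (padSet n k).Finite :=
  (List.finite_length_eq Bool n).subset (fun _ hw => hw.1)

lemma not_infix_cons {P : List Bool} {a : Bool} {t : List Bool}
    (h : ¬ P <:+: a :: t) : ¬ P <:+: t :=
  fun h' => h (h'.trans (List.suffix_cons a t).isInfix)

lemma head_false {w : List Bool} (hw : IsPadovan w) :
    ∃ t, w = false :: t := by
  obtain ⟨h1, -, -, -⟩ := hw
  cases w with
  | nil => simp at h1
  | cons a t =>
    simp only [List.head?_cons, Option.some.injEq] at h1
    exact ⟨t, by rw [h1]⟩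

lemma pad_cons01 {t : List Bool} (ht : IsPadovan t) :
    IsPadovan (false :: true :: t) := by
  obtain ⟨t', rfl⟩ := head_false ht
  obtain ⟨h1, h2, h3, h4⟩ := ht
  refine ⟨rfl, ?_, ?_, ?_⟩
  · rw [List.getLast?_cons_cons, List.getLast?_cons_cons]; exact h2
  · intro h
    rcases List.infix_cons_iff.1 h with h | h
    · simp [List.cons_prefix_cons] at h
    rcases List.infix_cons_iff.1 h with h | h
    · simp [List.cons_prefix_cons] at h
    · exact h3 h
  · intro h
    rcases List.infix_cons_iff.1 h with h | h
    · simp [List.cons_prefix_cons] at h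
    rcases List.infix_cons_iff.1 h with h | h
    · simp [List.cons_prefix_cons] at h
    · exact h4 h

lemma pad_cons011 {t : List Bool} (ht : IsPadovan t) :
    IsPadovan (false :: true :: true :: t) := by
  obtain ⟨t', rfl⟩ := head_false ht
  obtain ⟨h1, h2, h3, h4⟩ := ht
  refine ⟨rfl, ?_, ?_, ?_⟩
  · rw [List.getLast?_cons_cons, List.getLast?_cons_cons, List.getLast?_cons_cons]
    exact h2
  · intro h
    rcases List.infix_cons_iff.1 h with h | h
    · simp [List.cons_prefix_cons] at h
    rcases List.infix_cons_iff.1 h with h | h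
    · simp [List.cons_prefix_cons] at h
    rcases List.infix_cons_iff.1 h with h | h
    · simp [List.cons_prefix_cons] at h
    · exact h3 h
  · intro h
    rcases List.infix_cons_iff.1 h with h | h
    · simp [List.cons_prefix_cons] at h
    rcases List.infix_cons_iff.1 h with h | h
    · simp [List.cons_prefix_cons] at h
    rcases List.infix_cons_iff.1 h with h | h
    · simp [List.cons_prefix_cons] at h
    · exact h4 h

lemma decomp {w : List Bool} (hw : IsPadovan w) (hl : 3 ≤ w.length) :
    (∃ t, IsPadovan t ∧ w = false :: true :: t) ∨
    (∃ t, IsPadovan t ∧ w = false :: true :: true :: t) := by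
  obtain ⟨h1, h2, h3, h4⟩ := hw
  match w, hl with
  | a :: b :: c :: t, _ =>
    simp only [List.head?_cons, Option.some.injEq] at h1
    subst h1
    cases b with
    | false => exact absurd (List.IsPrefix.isInfix ⟨c :: t, rfl⟩) h3
    | true =>
      cases c with
      | false =>
        left
        refine ⟨false :: t, ⟨rfl, ?_, not_infix_cons (not_infix_cons h3),
          not_infix_cons (not_infix_cons h4)⟩, rfl⟩
        rw [List.getLast?_cons_cons, List.getLast?_cons_cons] at h2
        exact h2
      | true =>
        cases t with
        | nil => simp at h2
        | cons d t' =>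
          cases d with
          | true => exact absurd ⟨[false], t', rfl⟩ h4
          | false =>
            right
            refine ⟨false :: t', ⟨rfl, ?_,
              not_infix_cons (not_infix_cons (not_infix_cons h3)),
              not_infix_cons (not_infix_cons (not_infix_cons h4))⟩, rfl⟩
            rw [List.getLast?_cons_cons, List.getLast?_cons_cons,
              List.getLast?_cons_cons] at h2
            exact h2

lemma eq_single {w : List Bool} (hw : IsPadovan w) (hc : w.count true = 0) :
    w = [false] := by
  obtain ⟨t, rfl⟩ := head_false hw
  obtain ⟨-, -, h3, -⟩ := hw
  cases t with
  | nil => rfl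
  | cons b t' =>
    cases b with
    | false => exact absurd (List.IsPrefix.isInfix ⟨t', rfl⟩) h3
    | true => simp [List.count_cons] at hc

lemma padSet_zero (k : ℕ) : padSet 0 k = ∅ := by
  ext w
  simp only [padSet, Set.mem_setOf_eq, Set.mem_empty_iff_false, iff_false]
  rintro ⟨hlen, hpad, -⟩
  obtain ⟨t, rfl⟩ := head_false hpad
  simp at hlen

lemma padSet_one (k : ℕ) : padSet 1 k = if k = 0 then {[false]} else ∅ := by
  ext w
  simp only [padSet, Set.mem_setOf_eq]
  constructor
  · rintro ⟨hlen, hpad, hc⟩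
    obtain ⟨t, rfl⟩ := head_false hpad
    have : t = [] := by simpa using hlen
    subst this
    have : k = 0 := by simpa using hc.symm
    simp [this]
  · intro hw
    split_ifs at hw with hk
    · subst hk
      simp only [Set.mem_singleton_iff] at hw
      subst hw
      exact ⟨rfl, ⟨rfl, rfl, by decide, by decide⟩, by decide⟩
    · simp at hw

lemma padSet_two (k : ℕ) : padSet 2 k = ∅ := by
  ext w
  simp only [padSet, Set.mem_setOf_eq, Set.mem_empty_iff_false, iff_false]
  rintro ⟨hlen, hpad, -⟩
  obtain ⟨t, rfl⟩ := head_false hpad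
  obtain ⟨-, h2, h3, -⟩ := hpad
  match t, hlen with
  | [b], _ =>
    cases b with
    | false => exact absurd (List.IsPrefix.isInfix ⟨[], rfl⟩) h3
    | true => simp at h2

lemma padSet_rec (m j : ℕ) :
    padSet (m + 3) (j + 2) =
      (fun t => false :: true :: t) '' padSet (m + 1) (j + 1) ∪
      (fun t => false :: true :: true :: t) '' padSet m j := by
  ext w
  simp only [padSet, Set.mem_setOf_eq, Set.mem_union, Set.mem_image]
  constructor
  · rintro ⟨hlen, hpad, hc⟩
    rcases decomp hpad (by omega) with ⟨t, ht, rfl⟩ | ⟨t, ht, rfl⟩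
    · left
      refine ⟨t, ⟨by simpa using hlen, ht, ?_⟩, rfl⟩
      simp [List.count_cons] at hc
      omega
    · right
      refine ⟨t, ⟨by simpa using hlen, ht, ?_⟩, rfl⟩
      simp [List.count_cons] at hc
      omega
  · rintro (⟨t, ⟨hlen, ht, hc⟩, rfl⟩ | ⟨t, ⟨hlen, ht, hc⟩, rfl⟩)
    · exact ⟨by simp [hlen], pad_cons01 ht, by simp [List.count_cons, hc]⟩
    · refine ⟨by simp [hlen], pad_cons011 ht, ?_⟩
      simp only [List.count_cons, hc]
      simp

lemma ncard_rec (m j : ℕ) :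
    (padSet (m + 3) (j + 2)).ncard =
      (padSet (m + 1) (j + 1)).ncard + (padSet m j).ncard := by
  have inj1 : Function.Injective (fun t : List Bool => false :: true :: t) :=
    fun a b h => by simpa using h
  have inj2 : Function.Injective (fun t : List Bool => false :: true :: true :: t) :=
    fun a b h => by simpa using h
  have hdisj : Disjoint ((fun t => false :: true :: t) '' padSet (m + 1) (j + 1))
      ((fun t => false :: true :: true :: t) '' padSet m j) := by
    rw [Set.disjoint_left]
    rintro x ⟨t1, ht1, rfl⟩ ⟨t2, ht2, heq⟩
    simp only [List.cons.injEq, true_and] at heq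
    obtain ⟨t1', rfl⟩ := head_false ht1.2.1
    simp at heq
  rw [padSet_rec, Set.ncard_union_eq hdisj ((padSet_finite _ _).image _)
    ((padSet_finite _ _).image _),
    Set.ncard_image_of_injective _ inj1, Set.ncard_image_of_injective _ inj2]

lemma A_rec (m j : ℕ) : A (m + 3) (j + 2) = A (m + 1) (j + 1) + A m j := by
  unfold A
  split_ifs with h1 h2 h3 h2 h3 h3 h3 <;>
    first
      | omega
      | (rw [show m + 3 - (j + 2) - 1 = (m - j - 1) + 1 from by omega,
          show 2 * (j + 2) + 1 - (m + 3) = (2 * j + 1 - m) + 1 from by omega,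
          show m + 1 - (j + 1) - 1 = m - j - 1 from by omega,
          show 2 * (j + 1) + 1 - (m + 1) = (2 * j + 1 - m) + 1 from by omega,
          Nat.choose_succ_succ]
         exact Nat.add_comm _ _)
      | (rw [show m + 3 - (j + 2) - 1 = (m - j - 1) + 1 from by omega,
          show 2 * (j + 2) + 1 - (m + 3) = 0 from by omega,
          show m + 1 - (j + 1) - 1 = m - j - 1 from by omega,
          show 2 * (j + 1) + 1 - (m + 1) = 0 from by omega]
         simp)
      | (rw [show m + 3 - (j + 2) - 1 = 0 from by omega,
          Nat.choose_eq_zero_of_lt (by omega)])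
      | simp

lemma card_A : ∀ n k : ℕ, (padSet n k).ncard = A n k
  | 0, k => by
      rw [padSet_zero, Set.ncard_empty]
      unfold A
      rw [if_neg (by omega)]
  | 1, k => by
      rw [padSet_one]
      unfold A
      rcases Nat.eq_zero_or_pos k with rfl | hk
      · rw [if_pos rfl, if_pos (by omega), Set.ncard_singleton]
        simp
      · rw [if_neg (by omega), if_neg (by omega), Set.ncard_empty]
  | 2, k => by
      rw [padSet_two, Set.ncard_empty]
      unfold A
      split_ifs with h
      · rw [Nat.choose_eq_zero_of_lt (by omega)]
      · rfl
  | (m + 3), 0 => by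
      have : padSet (m + 3) 0 = ∅ := by
        ext w
        simp only [padSet, Set.mem_setOf_eq, Set.mem_empty_iff_false, iff_false]
        rintro ⟨hlen, hpad, hc⟩
        rw [eq_single hpad hc] at hlen
        simp at hlen
      rw [this, Set.ncard_empty]
      unfold A
      rw [if_neg (by omega)]
  | (m + 3), 1 => by
      have hsub : padSet (m + 3) 1 =
          if m = 0 then {[false, true, false]} else ∅ := by
        ext w
        simp only [padSet, Set.mem_setOf_eq]
        constructor
        · rintro ⟨hlen, hpad, hc⟩
          rcases decomp hpad (by omega) with ⟨t, ht, rfl⟩ | ⟨t, ht, rfl⟩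
          · have hct : t.count true = 0 := by
              simp [List.count_cons] at hc; omega
            rw [eq_single ht hct] at hlen ⊢
            have : m = 0 := by simp at hlen; omega
            simp [this]
          · exfalso
            simp [List.count_cons] at hc
        · intro hw
          split_ifs at hw with hm
          · subst hm
            simp only [Set.mem_singleton_iff] at hw
            subst hw
            exact ⟨rfl, ⟨rfl, rfl, by decide, by decide⟩, by decide⟩
          · simp at hw
      rw [hsub]
      unfold A
      split_ifs with hm h h
      · subst hm
        rw [Set.ncard_singleton]
        norm_num
      · subst hm; omega
      · omega
      · exact Set.ncard_empty _
  | (m + 3), (j + 2) => by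
      rw [ncard_rec, card_A (m + 1) (j + 1), card_A m j, A_rec]

end PadovanAux

/-- The number of Padovan words of length `n` with exactly `k` ones equals
`C(n-k-1, 2n-3k-2)`. -/
theorem padovan_weighted_count (n k : ℕ) (hn : 1 ≤ n)
    (hk1 : n / 2 ≤ k) (hk2 : k ≤ (2 * n - 2) / 3) :
    Nat.card {w : List Bool // w.length = n ∧ IsPadovan w ∧ w.count true = k} =
      (n - k - 1).choose (2 * n - 3 * k - 2) := by
  have hcard : Nat.card {w : List Bool // w.length = n ∧ IsPadovan w ∧ w.count true = k}
      = (PadovanAux.padSet n k).ncard := Nat.card_coe_set_eq _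
  rw [hcard, PadovanAux.card_A]
  unfold PadovanAux.A
  rw [if_pos ⟨by omega, by omega⟩,
    show 2 * n - 3 * k - 2 = (n - k - 1) - (2 * k + 1 - n) from by omega,
    Nat.choose_symm (by omega)]
end

section
/- For p,q ≥ 1, the number of edges of the graph A_{p,q} equals q·C(p+q−1, p−1), where C denotes the binomial coefficient. -/
/-- Two words are related if one is obtained from the other by replacing one
occurrence of the subword `ab` (`a` = `false`, `b` = `true`) with `ba`. -/
def ARel (u v : List Bool) : Prop :=
  ∃ x y : List Bool,
    (u = x ++ false :: true :: y ∧ v = x ++ true :: false :: y) ∨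
    (u = x ++ true :: false :: y ∧ v = x ++ false :: true :: y)

/-- The graph `A_{p,q}` whose vertices are the words with `p` letters `a`
(= `false`) and `q` letters `b` (= `true`), two words being adjacent if one is
obtained from the other by changing one subword `ab` into `ba`. -/
def AGraph (p q : ℕ) : SimpleGraph {w : List Bool // w.count false = p ∧ w.count true = q} where
  Adj u v := ARel u.1 v.1
  symm := by
    constructor
    rintro u v ⟨x, y, ⟨h1, h2⟩ | ⟨h1, h2⟩⟩
    · exact ⟨x, y, Or.inr ⟨h2, h1⟩⟩
    · exact ⟨x, y, Or.inl ⟨h2, h1⟩⟩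
  loopless := by
    constructor
    rintro u ⟨x, y, ⟨h1, h2⟩ | ⟨h1, h2⟩⟩ <;>
    · rw [h1] at h2
      have := List.append_cancel_left h2
      simp at this

/- ### Auxiliary material -/

abbrev W (m n : ℕ) := {w : List Bool // w.count false = m ∧ w.count true = n}

abbrev S (m n : ℕ) :=
  {xy : List Bool × List Bool //
    (xy.1 ++ xy.2).count false = m ∧ (xy.1 ++ xy.2).count true = n}

lemma length_eq_counts (w : List Bool) : w.length = w.count false + w.count true := by
  induction w with
  | nil => simp
  | cons a t ih =>
    cases a <;> simp only [List.count_cons, List.length_cons, ih] <;> simp <;> omega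

instance W_finite (m n : ℕ) : Finite (W m n) := by
  have : {w : List Bool | w.count false = m ∧ w.count true = n}.Finite := by
    apply (List.finite_length_eq Bool (m + n)).subset
    intro w hw
    simp only [Set.mem_setOf_eq] at *
    rw [length_eq_counts, hw.1, hw.2]
  exact this.to_subtype

def gW (m' n' : ℕ) : W m' (n' + 1) ⊕ W (m' + 1) n' → W (m' + 1) (n' + 1)
  | Sum.inl ⟨w, h⟩ => ⟨false :: w, by simp [List.count_cons, h.1, h.2]⟩
  | Sum.inr ⟨w, h⟩ => ⟨true :: w, by simp [List.count_cons, h.1, h.2]⟩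

lemma gW_bij (m' n' : ℕ) : Function.Bijective (gW m' n') := by
  constructor
  · rintro (⟨w, hw⟩ | ⟨w, hw⟩) (⟨v, hv⟩ | ⟨v, hv⟩) h <;>
      simp only [gW, Subtype.mk.injEq, List.cons.injEq] at h <;> simp_all
  · rintro ⟨w, h1, h2⟩
    match w with
    | [] => simp at h1
    | false :: t =>
      have e1 : t.count false = m' := by simp [List.count_cons] at h1; omega
      have e2 : t.count true = n' + 1 := by simpa [List.count_cons] using h2
      exact ⟨Sum.inl ⟨t, e1, e2⟩, rfl⟩
    | true :: t =>
      have e1 : t.count false = m' + 1 := by simpa [List.count_cons] using h1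
      have e2 : t.count true = n' := by simp [List.count_cons] at h2; omega
      exact ⟨Sum.inr ⟨t, e1, e2⟩, rfl⟩

lemma card_W (m n : ℕ) : Nat.card (W m n) = (m + n).choose m := by
  suffices H : ∀ k m n, m + n = k → Nat.card (W m n) = (m + n).choose m from H (m + n) m n rfl
  clear m n
  intro k
  induction k with
  | zero =>
    intro m n hk
    have hm : m = 0 := by omega
    have hn : n = 0 := by omega
    subst hm; subst hn
    have huniq : ∀ w : W 0 0, w = ⟨[], by simp⟩ := by
      rintro ⟨w, h1, h2⟩
      have : w.length = 0 := by rw [length_eq_counts, h1, h2]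
      exact Subtype.ext (List.length_eq_zero_iff.mp this)
    have : Unique (W 0 0) := ⟨⟨⟨[], by simp⟩⟩, huniq⟩
    simp [Nat.card_unique]
  | succ k ih =>
    intro m n hk
    rcases Nat.eq_zero_or_pos m with hm | hm
    · subst hm
      have huniq : ∀ w : W 0 n, w = ⟨List.replicate n true, by simp [List.count_replicate]⟩ := by
        rintro ⟨w, h1, h2⟩
        have hf : false ∉ w := List.count_eq_zero.mp h1
        refine Subtype.ext ?_
        show w = List.replicate n true
        rw [List.eq_replicate_iff]
        refine ⟨by rw [length_eq_counts, h1, h2]; omega, ?_⟩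
        intro b hb
        cases b
        · exact absurd hb hf
        · rfl
      have : Unique (W 0 n) := ⟨⟨_⟩, huniq⟩
      simp [Nat.card_unique]
    rcases Nat.eq_zero_or_pos n with hn | hn
    · subst hn
      have huniq : ∀ w : W m 0, w = ⟨List.replicate m false, by simp [List.count_replicate]⟩ := by
        rintro ⟨w, h1, h2⟩
        have ht : true ∉ w := List.count_eq_zero.mp h2
        refine Subtype.ext ?_
        show w = List.replicate m false
        rw [List.eq_replicate_iff]
        refine ⟨by rw [length_eq_counts, h1, h2]; omega, ?_⟩
        intro b hb
        cases b
        · rfl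
        · exact absurd hb ht
      have : Unique (W m 0) := ⟨⟨_⟩, huniq⟩
      simp [Nat.card_unique]
    obtain ⟨m', rfl⟩ : ∃ m', m = m' + 1 := ⟨m - 1, by omega⟩
    obtain ⟨n', rfl⟩ : ∃ n', n = n' + 1 := ⟨n - 1, by omega⟩
    have hcard : Nat.card (W (m' + 1) (n' + 1)) =
        Nat.card (W m' (n' + 1)) + Nat.card (W (m' + 1) n') := by
      rw [← Nat.card_congr (Equiv.ofBijective _ (gW_bij m' n')), Nat.card_sum]
    rw [hcard, ih m' (n' + 1) (by omega), ih (m' + 1) n' (by omega)]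
    have h2 : m' + 1 + (n' + 1) = (m' + (n' + 1)) + 1 := by omega
    rw [h2, Nat.choose_succ_succ]
    congr 2
    omega

def splitEquiv (m n : ℕ) : S m n ≃ W m n × Fin (m + n + 1) where
  toFun z := (⟨z.1.1 ++ z.1.2, z.2⟩, ⟨z.1.1.length, by
    have h := z.2
    have hlen : (z.1.1 ++ z.1.2).length = m + n := by
      rw [length_eq_counts, h.1, h.2]
    rw [List.length_append] at hlen
    omega⟩)
  invFun wi := ⟨(wi.1.1.take wi.2, wi.1.1.drop wi.2), by
    simpa using wi.1.2⟩
  left_inv z := by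
    refine Subtype.ext (Prod.ext ?_ ?_)
    · exact List.take_left
    · exact List.drop_left
  right_inv wi := by
    obtain ⟨⟨w, hw⟩, i⟩ := wi
    have hlen : w.length = m + n := by rw [length_eq_counts, hw.1, hw.2]
    refine Prod.ext (Subtype.ext ?_) ?_
    · exact List.take_append_drop _ _
    · refine Fin.ext ?_
      show (w.take i).length = (i : ℕ)
      rw [List.length_take]
      have : (i : ℕ) < m + n + 1 := i.2
      omega

lemma swap_unique : ∀ (x x' y y' : List Bool) (f t g h : Bool), f ≠ t → g ≠ h →
    x ++ f :: t :: y = x' ++ g :: h :: y' →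
    x ++ t :: f :: y = x' ++ h :: g :: y' →
    x = x' ∧ f = g ∧ t = h ∧ y = y'
  | [], [], y, y', f, t, g, h, hft, hgh, h1, h2 => by
    simp only [List.nil_append, List.cons.injEq] at h1 h2
    exact ⟨rfl, h1.1, h1.2.1, h1.2.2⟩
  | [], c :: xs, y, y', f, t, g, h, hft, hgh, h1, h2 => by
    simp only [List.nil_append, List.cons_append, List.cons.injEq] at h1 h2
    exact absurd (h1.1.trans h2.1.symm) hft
  | c :: xs, [], y, y', f, t, g, h, hft, hgh, h1, h2 => by
    simp only [List.nil_append, List.cons_append, List.cons.injEq] at h1 h2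
    exact absurd (h1.1.symm.trans h2.1) hgh
  | c :: xs, c' :: xs', y, y', f, t, g, h, hft, hgh, h1, h2 => by
    simp only [List.cons_append, List.cons.injEq] at h1 h2
    obtain ⟨hx, hf, ht, hy⟩ := swap_unique xs xs' y y' f t g h hft hgh h1.2 h2.2
    exact ⟨by rw [h1.1, hx], hf, ht, hy⟩

/-- For `p, q ≥ 1`, the number of edges of `A_{p,q}` equals `q * C(p+q-1, p-1)`. -/
theorem AGraph_edge_count (p q : ℕ) (hp : 1 ≤ p) (hq : 1 ≤ q) :
    Nat.card (AGraph p q).edgeSet = q * (p + q - 1).choose (p - 1) := by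
  obtain ⟨m, rfl⟩ : ∃ m, p = m + 1 := ⟨p - 1, by omega⟩
  obtain ⟨n, rfl⟩ : ∃ n, q = n + 1 := ⟨q - 1, by omega⟩
  have hcnt : ∀ (x y : List Bool), (x ++ y).count false = m → (x ++ y).count true = n →
      ((x ++ false :: true :: y).count false = m + 1 ∧
        (x ++ false :: true :: y).count true = n + 1)
      ∧ ((x ++ true :: false :: y).count false = m + 1 ∧
        (x ++ true :: false :: y).count true = n + 1) := by
    intro x y h1 h2
    simp only [List.count_append, List.count_cons] at h1 h2 ⊢
    simp at h1 h2 ⊢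
    omega
  let F : S m n → (AGraph (m + 1) (n + 1)).edgeSet := fun z =>
    ⟨s(⟨z.1.1 ++ false :: true :: z.1.2, (hcnt _ _ z.2.1 z.2.2).1⟩,
      ⟨z.1.1 ++ true :: false :: z.1.2, (hcnt _ _ z.2.1 z.2.2).2⟩),
     ⟨z.1.1, z.1.2, Or.inl ⟨rfl, rfl⟩⟩⟩
  have hbij : Function.Bijective F := by
    constructor
    · rintro ⟨⟨x, y⟩, hxy⟩ ⟨⟨x', y'⟩, hxy'⟩ h
      have h2 := congrArg Subtype.val h
      simp only [F] at h2
      rw [Sym2.eq_iff] at h2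
      rcases h2 with ⟨ha, hb⟩ | ⟨ha, hb⟩
      · have ha' := congrArg Subtype.val ha
        have hb' := congrArg Subtype.val hb
        obtain ⟨hx, -, -, hy⟩ := swap_unique x x' y y' false true false true
          (by simp) (by simp) ha' hb'
        exact Subtype.ext (Prod.ext hx hy)
      · have ha' := congrArg Subtype.val ha
        have hb' := congrArg Subtype.val hb
        obtain ⟨-, hft, -, -⟩ := swap_unique x x' y y' false true true false
          (by simp) (by simp) ha' hb'
        simp at hft
    · have key : ∀ u v (h : (AGraph (m + 1) (n + 1)).Adj u v),
          ∃ a : S m n, (F a).1 = s(u, v) := by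
        rintro ⟨u, hu1, hu2⟩ ⟨v, hv1, hv2⟩ ⟨x, y, ⟨h1, h2⟩ | ⟨h1, h2⟩⟩
        · have c1 : (x ++ y).count false = m := by
            subst h1
            simp only [List.count_append, List.count_cons] at hu1 ⊢
            simp at hu1 ⊢
            omega
          have c2 : (x ++ y).count true = n := by
            subst h1
            simp only [List.count_append, List.count_cons] at hu2 ⊢
            simp at hu2 ⊢
            omega
          refine ⟨⟨(x, y), c1, c2⟩, ?_⟩
          show s(_, _) = s(_, _)
          congr 1
          exacts [Subtype.ext h1.symm, Subtype.ext h2.symm]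
        · have c1 : (x ++ y).count false = m := by
            subst h2
            simp only [List.count_append, List.count_cons] at hv1 ⊢
            simp at hv1 ⊢
            omega
          have c2 : (x ++ y).count true = n := by
            subst h2
            simp only [List.count_append, List.count_cons] at hv2 ⊢
            simp at hv2 ⊢
            omega
          refine ⟨⟨(x, y), c1, c2⟩, ?_⟩
          show s(_, _) = s(_, _)
          rw [Sym2.eq_swap]
          congr 1
          exacts [Subtype.ext h1.symm, Subtype.ext h2.symm]
      rintro ⟨e, he⟩
      revert he
      induction e using Sym2.ind with
      | _ u v =>
        intro he
        rw [SimpleGraph.mem_edgeSet] at he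
        obtain ⟨a, ha⟩ := key u v he
        exact ⟨a, Subtype.ext ha⟩
  have h1 : Nat.card (AGraph (m + 1) (n + 1)).edgeSet = Nat.card (S m n) :=
    (Nat.card_congr (Equiv.ofBijective F hbij)).symm
  have h2 : Nat.card (S m n) = (m + n).choose m * (m + n + 1) := by
    rw [Nat.card_congr (splitEquiv m n), Nat.card_prod, card_W]
    simp [Nat.card_eq_fintype_card]
  rw [h1, h2]
  rw [show m + 1 + (n + 1) - 1 = m + n + 1 from by omega,
    show m + 1 - 1 = m from by omega]
  have A := Nat.add_one_mul_choose_eq (m + n) m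
  have B := Nat.choose_succ_right_eq (m + n + 1) m
  rw [show m + n + 1 - m = n + 1 from by omega] at B
  calc (m + n).choose m * (m + n + 1) = (m + n + 1) * (m + n).choose m := by ring
    _ = (m + n + 1).choose (m + 1) * (m + 1) := A
    _ = (m + n + 1).choose m * (n + 1) := B
    _ = (n + 1) * (m + n + 1).choose m := by ring
end

section
/- For p,q ≥ 1 and odd d, the number of vertices of A_{p,q} of degree d equals 2·C(p−1,(d−1)/2)·C(q−1,(d−1)/2). -/
/-- number of adjacent unequal pairs -/
def alt : List Bool → ℕ
  | a :: b :: l => (if a = b then 0 else 1) + alt (b :: l)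
  | _ => 0

/-- the finset of neighbours of a word -/
def NF : List Bool → Finset (List Bool)
  | a :: b :: l => (if a = b then ∅ else {b :: a :: l}) ∪ (NF (b :: l)).image (a :: ·)
  | _ => ∅

lemma aRel_nil (u : List Bool) : ¬ ARel [] u := by
  rintro ⟨x, y, ⟨h, _⟩ | ⟨h, _⟩⟩ <;> simp at h

lemma aRel_single (a : Bool) (u : List Bool) : ¬ ARel [a] u := by
  rintro ⟨x, y, ⟨h, _⟩ | ⟨h, _⟩⟩ <;> (cases x <;> simp_all)

lemma aRel_cons_iff (a : Bool) (w u : List Bool) :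
    ARel (a :: w) u ↔
      (∃ l, w = (!a) :: l ∧ u = (!a) :: a :: l) ∨
      (∃ u', ARel w u' ∧ u = a :: u') := by
  constructor
  · rintro ⟨x, y, ⟨h1, h2⟩ | ⟨h1, h2⟩⟩
    · cases x with
      | nil =>
        simp at h1
        exact Or.inl ⟨y, by simp [h1.1, h1.2], by simp [h1.1, h2]⟩
      | cons c x' =>
        simp at h1
        exact Or.inr ⟨x' ++ true :: false :: y, ⟨x', y, Or.inl ⟨h1.2, rfl⟩⟩,
          by simp [h2, h1.1]⟩
    · cases x with
      | nil =>
        simp at h1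
        exact Or.inl ⟨y, by simp [h1.1, h1.2], by simp [h1.1, h2]⟩
      | cons c x' =>
        simp at h1
        exact Or.inr ⟨x' ++ false :: true :: y, ⟨x', y, Or.inr ⟨h1.2, rfl⟩⟩,
          by simp [h2, h1.1]⟩
  · rintro (⟨l, hw, hu⟩ | ⟨u', ⟨x, y, ⟨h1, h2⟩ | ⟨h1, h2⟩⟩, hu⟩)
    · cases a
      · exact ⟨[], l, Or.inl ⟨by simp [hw], by simp [hu]⟩⟩
      · exact ⟨[], l, Or.inr ⟨by simp [hw], by simp [hu]⟩⟩
    · exact ⟨a :: x, y, Or.inl ⟨by simp [h1], by simp [hu, h2]⟩⟩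
    · exact ⟨a :: x, y, Or.inr ⟨by simp [h1], by simp [hu, h2]⟩⟩

lemma mem_NF : ∀ w u : List Bool, u ∈ NF w ↔ ARel w u := by
  intro w
  induction w with
  | nil => intro u; simp [NF, aRel_nil]
  | cons a w ih =>
    intro u
    cases w with
    | nil => simp [NF, aRel_single]
    | cons b l =>
      rw [aRel_cons_iff]
      simp only [NF, Finset.mem_union, Finset.mem_image]
      by_cases hab : a = b
      · subst hab
        simp only [eq_self_iff_true, if_true, Finset.notMem_empty, false_or]
        constructor
        · rintro ⟨t, ht, rfl⟩
          exact Or.inr ⟨t, (ih t).1 ht, rfl⟩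
        · rintro (⟨l', hl', _⟩ | ⟨u', hu', rfl⟩)
          · exfalso; cases a <;> simp_all
          · exact ⟨u', (ih u').2 hu', rfl⟩
      · have hb : b = !a := by cases a <;> cases b <;> simp_all
        subst hb
        simp only [if_neg hab, Finset.mem_singleton]
        constructor
        · rintro (rfl | ⟨t, ht, rfl⟩)
          · exact Or.inl ⟨l, rfl, rfl⟩
          · exact Or.inr ⟨t, (ih t).1 ht, rfl⟩
        · rintro (⟨l', hl', rfl⟩ | ⟨u', hu', rfl⟩)
          · simp at hl'; subst hl'; exact Or.inl rfl
          · exact Or.inr ⟨u', (ih u').2 hu', rfl⟩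

lemma card_NF : ∀ w : List Bool, (NF w).card = alt w := by
  intro w
  induction w with
  | nil => simp [NF, alt]
  | cons a w ih =>
    cases w with
    | nil => simp [NF, alt]
    | cons b l =>
      simp only [NF, alt]
      rw [Finset.card_union_of_disjoint, Finset.card_image_of_injective _ (List.cons_injective),
        ih]
      · by_cases hab : a = b <;> simp [hab]
      · by_cases hab : a = b
        · simp [hab]
        · simp only [if_neg hab]
          rw [Finset.disjoint_left]
          rintro x hx hx2
          rw [Finset.mem_image] at hx2
          obtain ⟨t, ht, rfl⟩ := hx2
          simp at hx
          exact hab hx.1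

lemma aRel_count {u v : List Bool} (h : ARel u v) (c : Bool) : v.count c = u.count c := by
  obtain ⟨x, y, ⟨h1, h2⟩ | ⟨h1, h2⟩⟩ := h <;> subst h1 <;> subst h2 <;>
    simp [List.count_append, List.count_cons] <;> ring

lemma nat_card_neighbor (p q : ℕ) (v : {w : List Bool // w.count false = p ∧ w.count true = q}) :
    Nat.card ((AGraph p q).neighborSet v) = alt v.1 := by
  have e : (AGraph p q).neighborSet v ≃ {u : List Bool // u ∈ NF v.1} :=
    { toFun := fun u => ⟨u.1.1, (mem_NF _ _).2 u.2⟩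
      invFun := fun u => ⟨⟨u.1, by
          have h := (mem_NF _ _).1 u.2
          exact ⟨(aRel_count h false).trans v.2.1, (aRel_count h true).trans v.2.2⟩⟩,
        (mem_NF _ _).1 u.2⟩
      left_inv := fun u => by ext : 2; rfl
      right_inv := fun u => rfl }
  rw [Nat.card_congr e, Nat.card_eq_finsetCard, card_NF]

/-- number of words with `p` falses, `q` trues, `alt = d`, starting with `b` -/
def fc : ℕ → ℕ → ℕ → Bool → ℕ
  | 0, _, _, false => 0
  | _, 0, _, true => 0
  | p + 1, q, d, false =>
      (if p = 0 ∧ q = 0 ∧ d = 0 then 1 else 0) + fc p q d false +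
        (if d = 0 then 0 else fc p q (d - 1) true)
  | p, q + 1, d, true =>
      (if p = 0 ∧ q = 0 ∧ d = 0 then 1 else 0) + fc p q d true +
        (if d = 0 then 0 else fc p q (d - 1) false)
  termination_by p q d b => p + q

/-- the corresponding finsets of words -/
def WC : ℕ → ℕ → ℕ → Bool → Finset (List Bool)
  | 0, _, _, false => ∅
  | _, 0, _, true => ∅
  | p + 1, q, d, false =>
      (({[]} : Finset (List Bool)).filter (fun _ => p = 0 ∧ q = 0 ∧ d = 0) ∪
        (WC p q d false ∪ (WC p q (d - 1) true).filter (fun _ => d ≠ 0))).image (false :: ·)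
  | p, q + 1, d, true =>
      (({[]} : Finset (List Bool)).filter (fun _ => p = 0 ∧ q = 0 ∧ d = 0) ∪
        (WC p q d true ∪ (WC p q (d - 1) false).filter (fun _ => d ≠ 0))).image (true :: ·)
  termination_by p q d b => p + q

lemma mem_WC : ∀ (w : List Bool) (p q d : ℕ) (b : Bool),
    w ∈ WC p q d b ↔ w.count false = p ∧ w.count true = q ∧ alt w = d ∧ w.head? = some b := by
  intro w
  induction w with
  | nil =>
    intro p q d b
    cases b
    · cases p <;> simp [WC]
    · cases q <;> simp [WC]
  | cons c t ih =>
    intro p q d b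
    cases b
    · cases p with
      | zero =>
        simp only [WC, Finset.notMem_empty, false_iff]
        rintro ⟨h1, -, -, h4⟩
        simp at h4
        subst h4
        simp [List.count_cons] at h1
      | succ p =>
        simp only [WC, Finset.mem_image, Finset.mem_union, Finset.mem_filter,
          Finset.mem_singleton, ih]
        cases c with
        | true => simp
        | false =>
          cases t with
          | nil => simp [alt, List.count_cons, ih] <;> omega
          | cons e t' => cases e <;> simp [alt, List.count_cons, ih] <;> omega
    · cases q with
      | zero =>
        simp only [WC, Finset.notMem_empty, false_iff]
        rintro ⟨-, h2, -, h4⟩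
        simp at h4
        subst h4
        simp [List.count_cons] at h2
      | succ q =>
        simp only [WC, Finset.mem_image, Finset.mem_union, Finset.mem_filter,
          Finset.mem_singleton, ih]
        cases c with
        | false => simp
        | true =>
          cases t with
          | nil => simp [alt, List.count_cons, ih] <;> omega
          | cons e t' => cases e <;> simp [alt, List.count_cons, ih] <;> omega

lemma card_WC : ∀ (n p q d : ℕ) (b : Bool), p + q ≤ n → (WC p q d b).card = fc p q d b := by
  intro n
  induction n with
  | zero =>
    rintro p q d b h
    obtain ⟨rfl, rfl⟩ : p = 0 ∧ q = 0 := by omega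
    cases b <;> simp [WC, fc]
  | succ n ihn =>
    intro p q d b h
    cases b
    · cases p with
      | zero => simp [WC, fc]
      | succ p =>
        simp only [WC, fc]
        have hd1 : Disjoint (({[]} : Finset (List Bool)).filter (fun _ => p = 0 ∧ q = 0 ∧ d = 0))
            (WC p q d false ∪ (WC p q (d - 1) true).filter (fun _ => d ≠ 0)) := by
          rw [Finset.disjoint_left]
          intro x hx hx2
          simp only [Finset.mem_filter, Finset.mem_singleton] at hx
          obtain ⟨rfl, -⟩ := hx
          rcases Finset.mem_union.1 hx2 with h' | h'
          · have := ((mem_WC _ _ _ _ _).1 h').2.2.2; simp at this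
          · have := ((mem_WC _ _ _ _ _).1 (Finset.mem_filter.1 h').1).2.2.2; simp at this
        have hd2 : Disjoint (WC p q d false) ((WC p q (d - 1) true).filter (fun _ => d ≠ 0)) := by
          rw [Finset.disjoint_left]
          intro x hx hx2
          have h1 := ((mem_WC _ _ _ _ _).1 hx).2.2.2
          have h2 := ((mem_WC _ _ _ _ _).1 (Finset.mem_filter.1 hx2).1).2.2.2
          rw [h1] at h2; simp at h2
        rw [Finset.card_image_of_injective _ (List.cons_injective),
          Finset.card_union_of_disjoint hd1, Finset.card_union_of_disjoint hd2,
          Finset.filter_const, Finset.filter_const, ihn p q d false (by omega)]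
        by_cases hdd : d = 0 <;> by_cases hp0 : p = 0 <;> by_cases hq0 : q = 0 <;>
          simp [hdd, hp0, hq0, ihn p q (d - 1) true (by omega)] <;>
          exact ihn _ _ _ _ (by omega)
    · cases q with
      | zero => simp [WC, fc]
      | succ q =>
        simp only [WC, fc]
        have hd1 : Disjoint (({[]} : Finset (List Bool)).filter (fun _ => p = 0 ∧ q = 0 ∧ d = 0))
            (WC p q d true ∪ (WC p q (d - 1) false).filter (fun _ => d ≠ 0)) := by
          rw [Finset.disjoint_left]
          intro x hx hx2
          simp only [Finset.mem_filter, Finset.mem_singleton] at hx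
          obtain ⟨rfl, -⟩ := hx
          rcases Finset.mem_union.1 hx2 with h' | h'
          · have := ((mem_WC _ _ _ _ _).1 h').2.2.2; simp at this
          · have := ((mem_WC _ _ _ _ _).1 (Finset.mem_filter.1 h').1).2.2.2; simp at this
        have hd2 : Disjoint (WC p q d true) ((WC p q (d - 1) false).filter (fun _ => d ≠ 0)) := by
          rw [Finset.disjoint_left]
          intro x hx hx2
          have h1 := ((mem_WC _ _ _ _ _).1 hx).2.2.2
          have h2 := ((mem_WC _ _ _ _ _).1 (Finset.mem_filter.1 hx2).1).2.2.2
          rw [h1] at h2; simp at h2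
        rw [Finset.card_image_of_injective _ (List.cons_injective),
          Finset.card_union_of_disjoint hd1, Finset.card_union_of_disjoint hd2,
          Finset.filter_const, Finset.filter_const, ihn p q d true (by omega)]
        by_cases hdd : d = 0 <;> by_cases hp0 : p = 0 <;> by_cases hq0 : q = 0 <;>
          simp [hdd, hp0, hq0, ihn p q (d - 1) false (by omega)] <;>
          exact ihn _ _ _ _ (by omega)

lemma fc_false_step (p q d : ℕ) :
    fc (p + 1) q d false = (if p = 0 ∧ q = 0 ∧ d = 0 then 1 else 0) + fc p q d false +
      (if d = 0 then 0 else fc p q (d - 1) true) := by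
  rw [fc]

lemma fc_true_step (p q d : ℕ) :
    fc p (q + 1) d true = (if p = 0 ∧ q = 0 ∧ d = 0 then 1 else 0) + fc p q d true +
      (if d = 0 then 0 else fc p q (d - 1) false) := by
  rw [fc]

lemma fc_0_false (q d : ℕ) : fc 0 q d false = 0 := by rw [fc]

lemma fc_q0_true (p d : ℕ) : fc p 0 d true = 0 := by rw [fc]

lemma fc_all_true : ∀ q d, fc 0 q d true = if d = 0 ∧ 1 ≤ q then 1 else 0 := by
  intro q
  induction q with
  | zero => intro d; rw [fc_q0_true]; simp
  | succ q ih =>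
    intro d
    rw [fc_true_step, ih, fc_0_false]
    by_cases hd : d = 0 <;> by_cases hq : q = 0 <;> simp [hd, hq]

lemma fc_all_false : ∀ p d, fc p 0 d false = if d = 0 ∧ 1 ≤ p then 1 else 0 := by
  intro p
  induction p with
  | zero => intro d; rw [fc_0_false]; simp
  | succ p ih =>
    intro d
    rw [fc_false_step, ih, fc_q0_true]
    by_cases hd : d = 0 <;> by_cases hp : p = 0 <;> simp [hd, hp]

lemma fc_d0_false : ∀ p q, fc p q 0 false = if q = 0 ∧ 1 ≤ p then 1 else 0 := by
  intro p
  induction p with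
  | zero => intro q; rw [fc_0_false]; simp
  | succ p ih =>
    intro q
    rw [fc_false_step, ih]
    by_cases hq : q = 0 <;> by_cases hp : p = 0 <;> simp [hq, hp]

lemma fc_d0_true : ∀ q p, fc p q 0 true = if p = 0 ∧ 1 ≤ q then 1 else 0 := by
  intro q
  induction q with
  | zero => intro p; rw [fc_q0_true]; simp
  | succ q ih =>
    intro p
    rw [fc_true_step, ih]
    by_cases hq : q = 0 <;> by_cases hp : p = 0 <;> simp [hq, hp]

lemma pascal {p m : ℕ} (hp : 1 ≤ p) (hm : 1 ≤ m) :
    (p - 1).choose m + (p - 1).choose (m - 1) = p.choose m := by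
  obtain ⟨t, rfl⟩ : ∃ t, p = t + 1 := ⟨p - 1, by omega⟩
  obtain ⟨k, rfl⟩ : ∃ k, m = k + 1 := ⟨m - 1, by omega⟩
  simp only [Nat.add_sub_cancel, Nat.choose_succ_succ, Nat.succ_eq_add_one]
  omega

lemma fc_closed : ∀ (n p q : ℕ), p + q = n → 1 ≤ p → 1 ≤ q → ∀ m,
    fc p q (2 * m + 1) false = (p - 1).choose m * (q - 1).choose m ∧
    fc p q (2 * m + 1) true = (p - 1).choose m * (q - 1).choose m ∧
    (1 ≤ m → fc p q (2 * m) false = (p - 1).choose m * (q - 1).choose (m - 1)) ∧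
    (1 ≤ m → fc p q (2 * m) true = (p - 1).choose (m - 1) * (q - 1).choose m) := by
  intro n
  induction n using Nat.strong_induction_on with
  | _ n ihn =>
  rintro p q rfl hp hq m
  obtain ⟨p, rfl⟩ : ∃ p', p = p' + 1 := ⟨p - 1, by omega⟩
  obtain ⟨q, rfl⟩ : ∃ q', q = q' + 1 := ⟨q - 1, by omega⟩
  simp only [Nat.add_sub_cancel]
  refine ⟨?_, ?_, ?_, ?_⟩
  · -- odd, starting with false
    rw [fc_false_step, if_neg (by omega), if_neg (by omega),
      show 2 * m + 1 - 1 = 2 * m from by omega]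
    rcases Nat.eq_zero_or_pos p with rfl | hp'
    · rw [fc_0_false, fc_all_true]
      cases m with
      | zero => norm_num
      | succ k => rw [if_neg (by omega)]; simp
    · obtain ⟨t, rfl⟩ : ∃ t, p = t + 1 := ⟨p - 1, by omega⟩
      have IH := ihn ((t + 1) + (q + 1)) (by omega) (t + 1) (q + 1) rfl (by omega) (by omega)
      cases m with
      | zero =>
        rw [(IH 0).1]
        simp only [Nat.mul_zero]
        rw [fc_d0_true, if_neg (by omega)]
        simp
      | succ k =>
        rw [(IH (k + 1)).1, (IH (k + 1)).2.2.2 (by omega)]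
        simp only [Nat.add_sub_cancel, Nat.choose_succ_succ, Nat.succ_eq_add_one]
        ring
  · -- odd, starting with true
    rw [fc_true_step, if_neg (by omega), if_neg (by omega),
      show 2 * m + 1 - 1 = 2 * m from by omega]
    rcases Nat.eq_zero_or_pos q with rfl | hq'
    · rw [fc_q0_true, fc_all_false]
      cases m with
      | zero => norm_num
      | succ k => rw [if_neg (by omega)]; simp
    · obtain ⟨s, rfl⟩ : ∃ s, q = s + 1 := ⟨q - 1, by omega⟩
      have IH := ihn ((p + 1) + (s + 1)) (by omega) (p + 1) (s + 1) rfl (by omega) (by omega)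
      cases m with
      | zero =>
        rw [(IH 0).2.1]
        simp only [Nat.mul_zero]
        rw [fc_d0_false, if_neg (by omega)]
        simp
      | succ k =>
        rw [(IH (k + 1)).2.1, (IH (k + 1)).2.2.1 (by omega)]
        simp only [Nat.add_sub_cancel, Nat.choose_succ_succ, Nat.succ_eq_add_one]
        ring
  · -- even, starting with false
    intro hm
    obtain ⟨k, rfl⟩ : ∃ k, m = k + 1 := ⟨m - 1, by omega⟩
    simp only [Nat.add_sub_cancel]
    rw [fc_false_step, if_neg (by omega), if_neg (by omega),
      show 2 * (k + 1) - 1 = 2 * k + 1 from by omega]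
    rcases Nat.eq_zero_or_pos p with rfl | hp'
    · rw [fc_0_false, fc_all_true, if_neg (by omega)]
      simp
    · obtain ⟨t, rfl⟩ : ∃ t, p = t + 1 := ⟨p - 1, by omega⟩
      have IH := ihn ((t + 1) + (q + 1)) (by omega) (t + 1) (q + 1) rfl (by omega) (by omega)
      rw [(IH (k + 1)).2.2.1 (by omega), (IH k).2.1]
      simp only [Nat.add_sub_cancel, Nat.choose_succ_succ, Nat.succ_eq_add_one]
      ring
  · -- even, starting with true
    intro hm
    obtain ⟨k, rfl⟩ : ∃ k, m = k + 1 := ⟨m - 1, by omega⟩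
    simp only [Nat.add_sub_cancel]
    rw [fc_true_step, if_neg (by omega), if_neg (by omega),
      show 2 * (k + 1) - 1 = 2 * k + 1 from by omega]
    rcases Nat.eq_zero_or_pos q with rfl | hq'
    · rw [fc_q0_true, fc_all_false, if_neg (by omega)]
      simp
    · obtain ⟨s, rfl⟩ : ∃ s, q = s + 1 := ⟨q - 1, by omega⟩
      have IH := ihn ((p + 1) + (s + 1)) (by omega) (p + 1) (s + 1) rfl (by omega) (by omega)
      rw [(IH (k + 1)).2.2.2 (by omega), (IH k).1]
      simp only [Nat.add_sub_cancel, Nat.choose_succ_succ, Nat.succ_eq_add_one]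
      ring

/-- For `p, q ≥ 1` and odd `d`, the number of vertices of `A_{p,q}` of degree
`d` equals `2 * C(p-1, (d-1)/2) * C(q-1, (d-1)/2)`. -/
theorem AGraph_degree_count_odd (p q d : ℕ) (hp : 1 ≤ p) (hq : 1 ≤ q) (hd : Odd d) :
    Nat.card {v : {w : List Bool // w.count false = p ∧ w.count true = q} //
        Nat.card ((AGraph p q).neighborSet v) = d} =
      2 * ((p - 1).choose ((d - 1) / 2) * (q - 1).choose ((d - 1) / 2)) := by
  obtain ⟨m, rfl⟩ := hd
  have hm : (2 * m + 1 - 1) / 2 = m := by omega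
  rw [hm]
  have e1 : {v : {w : List Bool // w.count false = p ∧ w.count true = q} //
      Nat.card ((AGraph p q).neighborSet v) = 2 * m + 1} ≃
      {v : {w : List Bool // w.count false = p ∧ w.count true = q} // alt v.1 = 2 * m + 1} :=
    Equiv.subtypeEquivRight (fun v => by rw [nat_card_neighbor])
  have e2 : {v : {w : List Bool // w.count false = p ∧ w.count true = q} // alt v.1 = 2 * m + 1} ≃
      {w : List Bool // w ∈ WC p q (2 * m + 1) false ∪ WC p q (2 * m + 1) true} :=
    { toFun := fun v => ⟨v.1.1, by
        have h1 := v.1.2.1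
        have h2 := v.1.2.2
        have h3 := v.2
        rcases hw : v.1.1 with - | ⟨c, t⟩
        · exfalso; rw [hw] at h1; simp at h1; omega
        · rw [hw] at h1 h2 h3
          rw [Finset.mem_union]
          cases c
          · exact Or.inl ((mem_WC _ _ _ _ _).2 ⟨h1, h2, h3, rfl⟩)
          · exact Or.inr ((mem_WC _ _ _ _ _).2 ⟨h1, h2, h3, rfl⟩)⟩
      invFun := fun w => ⟨⟨w.1, by
          rcases Finset.mem_union.1 w.2 with h | h <;>
            exact ⟨((mem_WC _ _ _ _ _).1 h).1, ((mem_WC _ _ _ _ _).1 h).2.1⟩⟩, by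
          rcases Finset.mem_union.1 w.2 with h | h <;>
            exact ((mem_WC _ _ _ _ _).1 h).2.2.1⟩
      left_inv := fun v => Subtype.ext (Subtype.ext rfl)
      right_inv := fun w => rfl }
  have hdisj : Disjoint (WC p q (2 * m + 1) false) (WC p q (2 * m + 1) true) := by
    rw [Finset.disjoint_left]
    intro x hx hx2
    have h1 := ((mem_WC _ _ _ _ _).1 hx).2.2.2
    have h2 := ((mem_WC _ _ _ _ _).1 hx2).2.2.2
    rw [h1] at h2
    simp at h2
  rw [Nat.card_congr (e1.trans e2), Nat.card_eq_finsetCard,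
    Finset.card_union_of_disjoint hdisj,
    card_WC (p + q) p q (2 * m + 1) false le_rfl,
    card_WC (p + q) p q (2 * m + 1) true le_rfl]
  have h := fc_closed (p + q) p q rfl hp hq m
  rw [h.1, h.2.1]
  ring
end

section
/- For p,q ≥ 0, the distance in the graph Π_{p,q} between two weak partitions λ = (λ_1,…,λ_q) and μ = (μ_1,…,μ_q) equals Σ_{i=1}^q |λ_i − μ_i|. -/
/-- One sequence is obtained from the other by adding 1 to exactly one part. -/
def PiAdj {q : ℕ} (l m : Fin q → ℕ) : Prop :=
  ∃ i, (m i = l i + 1 ∧ ∀ j, j ≠ i → m j = l j) ∨ (l i = m i + 1 ∧ ∀ j, j ≠ i → m j = l j)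

/-- Vertices of `Π_{p,q}`: weak partitions into `q` parts, each of size at most
`p`, i.e. nonincreasing sequences of `q` integers in `[0, p]`. -/
def PiVert (p q : ℕ) := {f : Fin q → ℕ // Antitone f ∧ ∀ i, f i ≤ p}

/-- The graph `Π_{p,q}`: two weak partitions are adjacent if one is obtained
from the other by adding 1 to one of the parts. -/
def PiGraph (p q : ℕ) : SimpleGraph (PiVert p q) where
  Adj x y := PiAdj x.1 y.1
  symm := by
    constructor
    rintro x y ⟨i, ⟨h1, h2⟩ | ⟨h1, h2⟩⟩
    · exact ⟨i, Or.inr ⟨h1, fun j hj => (h2 j hj).symm⟩⟩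
    · exact ⟨i, Or.inl ⟨h1, fun j hj => (h2 j hj).symm⟩⟩
  loopless := by
    constructor
    rintro x ⟨i, ⟨h1, _⟩ | ⟨h1, _⟩⟩ <;> omega

/-- The sum `Σ |a_i - b_i|`. -/
def piSum {q : ℕ} (a b : Fin q → ℕ) : ℕ := ∑ i : Fin q, ((a i : ℤ) - (b i : ℤ)).natAbs

lemma piSum_split {q : ℕ} (a b : Fin q → ℕ) (i : Fin q) :
    piSum a b = ((a i : ℤ) - (b i : ℤ)).natAbs
      + ∑ j ∈ Finset.univ.erase i, ((a j : ℤ) - (b j : ℤ)).natAbs :=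
  (Finset.add_sum_erase _ _ (Finset.mem_univ i)).symm

lemma adj_piSum_le {q : ℕ} {a b : Fin q → ℕ} (h : PiAdj a b) (c : Fin q → ℕ) :
    piSum a c ≤ piSum b c + 1 := by
  obtain ⟨i, ⟨h1, h2⟩ | ⟨h1, h2⟩⟩ := h <;>
  · rw [piSum_split a c i, piSum_split b c i]
    have he : ∑ j ∈ Finset.univ.erase i, ((a j : ℤ) - (c j : ℤ)).natAbs
        = ∑ j ∈ Finset.univ.erase i, ((b j : ℤ) - (c j : ℤ)).natAbs := by
      refine Finset.sum_congr rfl fun j hj => ?_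
      rw [h2 j (Finset.ne_of_mem_erase hj)]
    rw [he]
    omega

lemma walk_piSum {p q : ℕ} {x y : PiVert p q} (w : (PiGraph p q).Walk x y) :
    piSum x.1 y.1 ≤ w.length := by
  induction w with
  | nil => simp [piSum]
  | @cons u v t h w ih =>
    have := adj_piSum_le h t.1
    simp only [SimpleGraph.Walk.length_cons]
    omega

lemma step_exists {p q : ℕ} (x y : PiVert p q) (h : piSum x.1 y.1 ≠ 0) :
    ∃ x' : PiVert p q, (PiGraph p q).Adj x x' ∧ piSum x'.1 y.1 + 1 = piSum x.1 y.1 := by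
  have hne : (Finset.univ.filter (fun j => x.1 j ≠ y.1 j)).Nonempty := by
    by_contra hc
    apply h
    rw [Finset.not_nonempty_iff_eq_empty] at hc
    refine Finset.sum_eq_zero fun j _ => ?_
    have hxy : x.1 j = y.1 j := by
      by_contra hj
      have : j ∈ Finset.univ.filter (fun j => x.1 j ≠ y.1 j) := by simp [hj]
      simp [hc] at this
    omega
  obtain ⟨i, hidiff, hmin⟩ : ∃ i, x.1 i ≠ y.1 i ∧ ∀ j, x.1 j ≠ y.1 j → i ≤ j := by
    refine ⟨(Finset.univ.filter (fun j => x.1 j ≠ y.1 j)).min' hne, ?_, fun j hj =>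
      Finset.min'_le _ j (by simp [hj])⟩
    have := (Finset.univ.filter (fun j => x.1 j ≠ y.1 j)).min'_mem hne
    simpa using this
  rcases lt_or_gt_of_ne hidiff with hlt | hgt
  · -- increment at i
    set f : Fin q → ℕ := Function.update x.1 i (x.1 i + 1) with hf
    have hfi : f i = x.1 i + 1 := Function.update_self _ _ _
    have hfj : ∀ j, j ≠ i → f j = x.1 j := fun j hj => Function.update_of_ne hj _ _
    have hmono : Antitone f := by
      intro a b hab
      have hxab : x.1 b ≤ x.1 a := x.2.1 hab
      rcases eq_or_ne a i with ha | ha <;> rcases eq_or_ne b i with hb | hb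
      · rw [ha, hb]
      · rw [hfj b hb, ha, hfi]
        rw [ha] at hxab
        omega
      · rw [hfj a ha, hb, hfi]
        have hab' : a < i := by rw [← hb]; exact lt_of_le_of_ne hab (hb ▸ ha)
        have hxa : x.1 a = y.1 a := by
          by_contra hc
          exact absurd (hmin a hc) (not_le.mpr hab')
        have hya : y.1 i ≤ y.1 a := y.2.1 hab'.le
        rw [hb] at hxab
        omega
      · rw [hfj a ha, hfj b hb]
        exact hxab
    have hbnd : ∀ j, f j ≤ p := by
      intro j
      rcases eq_or_ne j i with hj | hj
      · rw [hj, hfi]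
        have := y.2.2 i
        omega
      · rw [hfj j hj]; exact x.2.2 j
    refine ⟨⟨f, hmono, hbnd⟩, ⟨i, Or.inl ⟨?_, hfj⟩⟩, ?_⟩
    · show f i = x.1 i + 1
      exact hfi
    show piSum f y.1 + 1 = piSum x.1 y.1
    rw [piSum_split f y.1 i, piSum_split x.1 y.1 i]
    have he : ∑ j ∈ Finset.univ.erase i, ((f j : ℤ) - (y.1 j : ℤ)).natAbs
        = ∑ j ∈ Finset.univ.erase i, ((x.1 j : ℤ) - (y.1 j : ℤ)).natAbs := by
      refine Finset.sum_congr rfl fun j hj => ?_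
      rw [hfj j (Finset.ne_of_mem_erase hj)]
    rw [he, hfi]
    omega
  · -- decrement at the last index k with x k = x i
    have hkne : (Finset.univ.filter (fun j => x.1 j = x.1 i)).Nonempty := ⟨i, by simp⟩
    obtain ⟨k, hk, hmax⟩ : ∃ k, x.1 k = x.1 i ∧ ∀ j, x.1 j = x.1 i → j ≤ k := by
      refine ⟨(Finset.univ.filter (fun j => x.1 j = x.1 i)).max' hkne, ?_, fun j hj =>
        Finset.le_max' _ j (by simp [hj])⟩
      have := (Finset.univ.filter (fun j => x.1 j = x.1 i)).max'_mem hkne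
      simpa using this
    have hik : i ≤ k := hmax i rfl
    have hyk : y.1 k ≤ y.1 i := y.2.1 hik
    have hpos : y.1 k < x.1 k := by omega
    set f : Fin q → ℕ := Function.update x.1 k (x.1 k - 1) with hf
    have hfi : f k = x.1 k - 1 := Function.update_self _ _ _
    have hfj : ∀ j, j ≠ k → f j = x.1 j := fun j hj => Function.update_of_ne hj _ _
    have hmono : Antitone f := by
      intro a b hab
      have hxab : x.1 b ≤ x.1 a := x.2.1 hab
      rcases eq_or_ne a k with ha | ha <;> rcases eq_or_ne b k with hb | hb
      · rw [ha, hb]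
      · rw [hfj b hb, ha, hfi]
        rw [ha] at hxab
        have h2 : x.1 b ≠ x.1 i := by
          intro hc
          have hbk : b ≤ k := hmax b hc
          have hab' : k < b := lt_of_le_of_ne (ha ▸ hab) (Ne.symm hb)
          exact absurd hbk (not_le.mpr hab')
        omega
      · rw [hfj a ha, hb, hfi]
        rw [hb] at hxab
        omega
      · rw [hfj a ha, hfj b hb]
        exact hxab
    have hbnd : ∀ j, f j ≤ p := by
      intro j
      rcases eq_or_ne j k with hj | hj
      · rw [hj, hfi]
        have := x.2.2 k
        omega
      · rw [hfj j hj]; exact x.2.2 j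
    refine ⟨⟨f, hmono, hbnd⟩, ⟨k, Or.inr ⟨?_, hfj⟩⟩, ?_⟩
    · show x.1 k = f k + 1
      rw [hfi]; omega
    show piSum f y.1 + 1 = piSum x.1 y.1
    rw [piSum_split f y.1 k, piSum_split x.1 y.1 k]
    have he : ∑ j ∈ Finset.univ.erase k, ((f j : ℤ) - (y.1 j : ℤ)).natAbs
        = ∑ j ∈ Finset.univ.erase k, ((x.1 j : ℤ) - (y.1 j : ℤ)).natAbs := by
      refine Finset.sum_congr rfl fun j hj => ?_
      rw [hfj j (Finset.ne_of_mem_erase hj)]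
    rw [he, hfi]
    have hcast : ((x.1 k - 1 : ℕ) : ℤ) = (x.1 k : ℤ) - 1 := by omega
    rw [hcast]
    omega

lemma walk_exists {p q : ℕ} : ∀ (n : ℕ) (x y : PiVert p q), piSum x.1 y.1 = n →
    ∃ w : (PiGraph p q).Walk x y, w.length = n := by
  intro n
  induction n with
  | zero =>
    intro x y hxy
    have : x = y := by
      have h : ∀ j ∈ Finset.univ, ((x.1 j : ℤ) - (y.1 j : ℤ)).natAbs = 0 :=
        (Finset.sum_eq_zero_iff).mp hxy
      have : x.1 = y.1 := funext fun j => by have := h j (Finset.mem_univ j); omega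
      exact Subtype.ext this
    subst this
    exact ⟨SimpleGraph.Walk.nil, rfl⟩
  | succ n ih =>
    intro x y hxy
    obtain ⟨x', hadj, hsum⟩ := step_exists x y (by omega)
    obtain ⟨w, hw⟩ := ih x' y (by omega)
    exact ⟨SimpleGraph.Walk.cons hadj w, by simp [hw]⟩

/-- The distance in `Π_{p,q}` between weak partitions `λ` and `μ` equals
`Σ_i |λ_i - μ_i|`. -/
theorem PiGraph_dist (p q : ℕ) (x y : PiVert p q) :
    (PiGraph p q).dist x y = ∑ i : Fin q, ((x.1 i : ℤ) - (y.1 i : ℤ)).natAbs := by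
  obtain ⟨w, hw⟩ := walk_exists (piSum x.1 y.1) x y rfl
  have hub : (PiGraph p q).dist x y ≤ piSum x.1 y.1 := hw ▸ SimpleGraph.dist_le w
  have hr : (PiGraph p q).Reachable x y := ⟨w⟩
  obtain ⟨w', hw'⟩ := hr.exists_walk_length_eq_dist
  have hlb : piSum x.1 y.1 ≤ (PiGraph p q).dist x y := hw' ▸ walk_piSum w'
  have : (PiGraph p q).dist x y = piSum x.1 y.1 := le_antisymm hub hlb
  simpa [piSum] using this
end

section
/- For min{p,q} ≥ 2, if a vertex x of Π_{p,q} has exactly one neighbor y with d(y,0) = d(x,0) − 1 (where 0 is the all-zero weak partition), then all nonzero parts of x are equal. -/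
/-- The all-zero weak partition, a vertex of `Π_{p,q}`. -/
def zeroVert (p q : ℕ) : PiVert p q :=
  ⟨fun _ => 0, fun _ _ _ => le_rfl, fun _ => Nat.zero_le p⟩

namespace LonelyAux

variable {p q : ℕ}

/-- The sum of the parts of a vertex. -/
def S (x : PiVert p q) : ℕ := ∑ i, x.1 i

lemma sum_succ {l m : Fin q → ℕ} (i : Fin q) (h1 : m i = l i + 1)
    (h2 : ∀ j, j ≠ i → m j = l j) : ∑ j, m j = (∑ j, l j) + 1 := by
  have key : ∀ j, m j = l j + if j = i then 1 else 0 := by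
    intro j
    by_cases hj : j = i
    · subst hj; simp [h1]
    · simp [hj, h2 j hj]
  calc ∑ j, m j = ∑ j, (l j + if j = i then 1 else 0) :=
        Finset.sum_congr rfl (fun j _ => key j)
    _ = (∑ j, l j) + ∑ j, (if j = i then 1 else 0) := Finset.sum_add_distrib
    _ = (∑ j, l j) + 1 := by rw [Finset.sum_ite_eq' Finset.univ i (fun _ => 1)]; simp

lemma adj_S {x y : PiVert p q} (h : (PiGraph p q).Adj x y) :
    S y = S x + 1 ∨ S x = S y + 1 := by
  obtain ⟨i, ⟨h1, h2⟩ | ⟨h1, h2⟩⟩ := h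
  · exact Or.inl (sum_succ i h1 h2)
  · exact Or.inr (sum_succ i h1 (fun j hj => (h2 j hj).symm))

lemma eq_zeroVert_of_S {x : PiVert p q} (h : S x = 0) : x = zeroVert p q := by
  apply Subtype.ext
  funext i
  have := Finset.sum_eq_zero_iff.mp h i (Finset.mem_univ i)
  simpa [zeroVert] using this

/-- Decrementing at an index after which all parts are strictly smaller
gives a neighbor with sum one less. -/
lemma decrement (x : PiVert p q) (a : Fin q) (ha : x.1 a ≠ 0)
    (hlt : ∀ j, a < j → x.1 j < x.1 a) :
    ∃ y : PiVert p q, (PiGraph p q).Adj x y ∧ S y + 1 = S x ∧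
      y.1 a + 1 = x.1 a ∧ ∀ j, j ≠ a → y.1 j = x.1 j := by
  set f : Fin q → ℕ := Function.update x.1 a (x.1 a - 1) with hf
  have hfa : f a = x.1 a - 1 := by simp [hf]
  have hfo : ∀ j, j ≠ a → f j = x.1 j := by
    intro j hj
    simp [hf, Function.update, hj]
  have hanti : Antitone f := by
    intro i j hij
    by_cases hi : i = a <;> by_cases hj : j = a
    · subst hi; subst hj; exact le_rfl
    · have haj : a < j := by
        rw [hi] at hij
        exact lt_of_le_of_ne hij (fun e => hj e.symm)
      rw [hfo j hj, hi, hfa]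
      have := hlt j haj
      omega
    · subst hj
      rw [hfo i hi, hfa]
      have := x.2.1 hij
      omega
    · rw [hfo i hi, hfo j hj]; exact x.2.1 hij
  have hbd : ∀ i, f i ≤ p := by
    intro i
    by_cases hi : i = a
    · rw [hi, hfa]; exact le_trans (Nat.sub_le _ _) (x.2.2 _)
    · rw [hfo i hi]; exact x.2.2 i
  refine ⟨⟨f, hanti, hbd⟩, ?_, ?_, ?_, hfo⟩
  · refine ⟨a, Or.inr ⟨?_, fun j hj => hfo j hj⟩⟩
    show x.1 a = f a + 1
    rw [hfa]; omega
  · have := sum_succ (l := f) (m := x.1) a (by rw [hfa]; omega)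
      (fun j hj => (hfo j hj).symm)
    show (∑ j, f j) + 1 = ∑ j, x.1 j
    omega
  · show f a + 1 = x.1 a
    rw [hfa]; omega

lemma exists_walk (x : PiVert p q) :
    ∃ w : (PiGraph p q).Walk x (zeroVert p q), w.length = S x := by
  generalize hn : S x = n
  induction n generalizing x with
  | zero =>
    have := eq_zeroVert_of_S hn
    subst this
    exact ⟨SimpleGraph.Walk.nil, rfl⟩
  | succ n ih =>
    have hne : ∃ i, x.1 i ≠ 0 := by
      by_contra hc
      push_neg at hc
      have : S x = 0 := Finset.sum_eq_zero (fun i _ => hc i)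
      omega
    obtain ⟨i, hi⟩ := hne
    set s : Finset (Fin q) := Finset.univ.filter (fun k => x.1 k ≠ 0) with hs
    have hsne : s.Nonempty := ⟨i, by simp [hs, hi]⟩
    set a := s.max' hsne with hadef
    have haa : x.1 a ≠ 0 := by
      have := s.max'_mem hsne
      simpa [hs] using this
    have hlt : ∀ j, a < j → x.1 j < x.1 a := by
      intro j hj
      have hj0 : x.1 j = 0 := by
        by_contra hc
        have : j ∈ s := by simp [hs, hc]
        exact absurd (s.le_max' j this) (not_le.mpr hj)
      rw [hj0]
      omega
    obtain ⟨y, hadj, hS, _, _⟩ := decrement x a haa hlt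
    obtain ⟨w, hw⟩ := ih y (by omega)
    exact ⟨SimpleGraph.Walk.cons hadj w, by simp [hw]⟩

lemma walk_len_gen {x y : PiVert p q} (w : (PiGraph p q).Walk x y) :
    S x ≤ S y + w.length := by
  induction w with
  | nil => simp
  | cons h w ih =>
    rcases adj_S h with h' | h' <;> simp [SimpleGraph.Walk.length_cons] <;> omega

lemma walk_len_ge {x : PiVert p q} (w : (PiGraph p q).Walk x (zeroVert p q)) :
    S x ≤ w.length := by
  have := walk_len_gen w
  have hz : S (zeroVert p q) = 0 := by simp [S, zeroVert]
  omega

lemma dist_eq (x : PiVert p q) :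
    (PiGraph p q).dist x (zeroVert p q) = S x := by
  obtain ⟨w, hw⟩ := exists_walk x
  have h1 : (PiGraph p q).dist x (zeroVert p q) ≤ S x :=
    hw ▸ SimpleGraph.dist_le w
  have hr : (PiGraph p q).Reachable x (zeroVert p q) := ⟨w⟩
  obtain ⟨w', hw'⟩ := hr.exists_walk_length_eq_dist
  have h2 := walk_len_ge w'
  omega

/-- For each nonzero value occurring in `x`, decrementing at the last index
carrying that value gives a neighbor. -/
lemma decrement_at_value (x : PiVert p q) (i : Fin q) (hi : x.1 i ≠ 0) :
    ∃ y : PiVert p q, (PiGraph p q).Adj x y ∧ S y + 1 = S x ∧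
      ∃ a, y.1 a + 1 = x.1 a ∧ x.1 a = x.1 i ∧ ∀ j, j ≠ a → y.1 j = x.1 j := by
  set s : Finset (Fin q) := Finset.univ.filter (fun k => x.1 k = x.1 i) with hs
  have hsne : s.Nonempty := ⟨i, by simp [hs]⟩
  set a := s.max' hsne with hadef
  have hav : x.1 a = x.1 i := by
    have := s.max'_mem hsne
    simpa [hs] using this
  have hlt : ∀ j, a < j → x.1 j < x.1 a := by
    intro j hj
    have h1 : x.1 j ≤ x.1 a := x.2.1 (le_of_lt hj)
    rcases lt_or_eq_of_le h1 with h2 | h2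
    · exact h2
    · exfalso
      have : j ∈ s := by simp [hs, h2, hav]
      exact absurd (s.le_max' j this) (not_le.mpr hj)
  obtain ⟨y, hadj, hS, hya, hyo⟩ := decrement x a (by rw [hav]; exact hi) hlt
  exact ⟨y, hadj, hS, a, hya, hav, hyo⟩

end LonelyAux

/-- If a vertex `x` of `Π_{p,q}` (with `min p q ≥ 2`) is lonely, i.e. it has
exactly one neighbor `y` with `d(y,0) = d(x,0) - 1`, then all nonzero parts of
`x` are equal. -/
theorem lonely_parts_equal (p q : ℕ) (h : 2 ≤ min p q) (x : PiVert p q)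
    (hx : ∃! y : PiVert p q, (PiGraph p q).Adj x y ∧
      (PiGraph p q).dist y (zeroVert p q) = (PiGraph p q).dist x (zeroVert p q) - 1) :
    ∀ i j, x.1 i ≠ 0 → x.1 j ≠ 0 → x.1 i = x.1 j := by
  classical
  intro i j hi hj
  by_contra hne
  obtain ⟨y0, _, huniq⟩ := hx
  obtain ⟨y1, hadj1, hS1, a, hya1, hav1, hyo1⟩ := LonelyAux.decrement_at_value x i hi
  obtain ⟨y2, hadj2, hS2, b, hya2, hav2, hyo2⟩ := LonelyAux.decrement_at_value x j hj
  have hd1 : (PiGraph p q).dist y1 (zeroVert p q) =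
      (PiGraph p q).dist x (zeroVert p q) - 1 := by
    rw [LonelyAux.dist_eq, LonelyAux.dist_eq]; omega
  have hd2 : (PiGraph p q).dist y2 (zeroVert p q) =
      (PiGraph p q).dist x (zeroVert p q) - 1 := by
    rw [LonelyAux.dist_eq, LonelyAux.dist_eq]; omega
  have he1 : y1 = y0 := huniq y1 ⟨hadj1, hd1⟩
  have he2 : y2 = y0 := huniq y2 ⟨hadj2, hd2⟩
  have he : y1 = y2 := he1.trans he2.symm
  have hab : a ≠ b := by
    intro e
    apply hne
    rw [← hav1, e, hav2]
  have h1 : y1.1 a + 1 = x.1 a := hya1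
  have h2 : y2.1 a = x.1 a := hyo2 a hab
  rw [he, h2] at h1
  omega
end
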